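/- arXiv:1610.05162 — 7 statements merged into one kernel-verified Lean document; each statement's English description precedes it below -/
import Mathlib

section
/- Let $p\in[1,\infty]$ and $f\in L^p(\mathbb{R}^N)$. If $A:=\sup_{h\neq 0}\|f(\cdot+h)-f\|_{L^p(\mathbb{R}^N)}/|h|$ is finite, then $A=\limsup_{|h|\to 0}\|f(\cdot+h)-f\|_{L^p(\mathbb{R}^N)}/|h|$. -/
/-!
The modulus `ω(h) = ‖f(· + h) - f‖_p` is subadditive: translation invariance of Lebesgue
measure and Minkowski's inequality give `ω(a + b) ≤ ω(a) + ω(b)`, hence `ω(n • h) ≤ n ω(h)`.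
So the difference quotient at `h` is at most the one at `h / n`, and letting `n → ∞` bounds it
by the `limsup` at `0`; the reverse inequality is immediate.
-/

open MeasureTheory Filter Topology ENNReal

section TranslateDifference

variable {G E : Type*} [MeasurableSpace G] [AddGroup G] [MeasurableAdd G]
  [NormedAddCommGroup E] {μ : Measure G} [μ.IsAddRightInvariant] {p : ℝ≥0∞} {f : G → E}

theorem eLpNorm_translate_sub_add_le (hp : 1 ≤ p) (hf : AEStronglyMeasurable f μ) (a b : G) :
    eLpNorm (fun x => f (x + (a + b)) - f x) p μ ≤
      eLpNorm (fun x => f (x + a) - f x) p μ + eLpNorm (fun x => f (x + b) - f x) p μ := by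
  have hshift (c : G) : AEStronglyMeasurable (fun x => f (x + c)) μ :=
    hf.comp_measurePreserving (measurePreserving_add_right μ c)
  have hsplit : (fun x => f (x + (a + b)) - f x) =
      (fun x => f (x + a + b) - f (x + a)) + fun x => f (x + a) - f x := by
    ext x
    rw [Pi.add_apply, sub_add_sub_cancel, add_assoc]
  have hinv : eLpNorm (fun x => f (x + a + b) - f (x + a)) p μ =
      eLpNorm (fun x => f (x + b) - f x) p μ :=
    eLpNorm_comp_measurePreserving (g := fun x => f (x + b) - f x) ((hshift b).sub hf)
      (measurePreserving_add_right μ a)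
  have hab : AEStronglyMeasurable (fun x => f (x + a + b)) μ := by
    simpa only [add_assoc] using hshift (a + b)
  rw [hsplit, add_comm _ (eLpNorm _ p μ), ← hinv]
  exact eLpNorm_add_le (hab.sub (hshift a)) ((hshift a).sub hf) hp

theorem eLpNorm_translate_sub_nsmul_le (hp : 1 ≤ p) (hf : AEStronglyMeasurable f μ) (h : G)
    (n : ℕ) :
    eLpNorm (fun x => f (x + n • h) - f x) p μ ≤ n * eLpNorm (fun x => f (x + h) - f x) p μ := by
  induction n with
  | zero => simp
  | succ n ih =>
    calc eLpNorm (fun x => f (x + (n + 1) • h) - f x) p μ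
        ≤ eLpNorm (fun x => f (x + n • h) - f x) p μ
            + eLpNorm (fun x => f (x + h) - f x) p μ := by
          simpa only [succ_nsmul] using eLpNorm_translate_sub_add_le hp hf (n • h) h
      _ ≤ (n + 1 : ℕ) * eLpNorm (fun x => f (x + h) - f x) p μ := by
          push_cast
          rw [add_mul, one_mul]
          gcongr

end TranslateDifference

section DifferenceQuotient

variable {E : Type*} [NormedAddCommGroup E] [NormedSpace ℝ E] {φ : E → ℝ≥0∞}

theorem div_norm_le_div_norm_inv_natCast_smul (hφ : ∀ (n : ℕ) h, φ (n • h) ≤ n * φ h) (h : E)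
    {n : ℕ} (hn : n ≠ 0) :
    φ h / ENNReal.ofReal ‖h‖ ≤ φ ((n : ℝ)⁻¹ • h) / ENNReal.ofReal ‖(n : ℝ)⁻¹ • h‖ := by
  have hh : n • ((n : ℝ)⁻¹ • h) = h := by
    rw [← Nat.cast_smul_eq_nsmul ℝ, smul_smul, mul_inv_cancel₀ (Nat.cast_ne_zero.2 hn),
      one_smul]
  have hnorm : ENNReal.ofReal ‖h‖ = n * ENNReal.ofReal ‖(n : ℝ)⁻¹ • h‖ := by
    conv_lhs => rw [← hh]
    rw [RCLike.norm_nsmul ℝ, nsmul_eq_mul, ENNReal.ofReal_mul n.cast_nonneg,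
      ENNReal.ofReal_natCast]
  calc φ h / ENNReal.ofReal ‖h‖
      ≤ n * φ ((n : ℝ)⁻¹ • h) / (n * ENNReal.ofReal ‖(n : ℝ)⁻¹ • h‖) := by
        rw [← hnorm]
        gcongr
        simpa only [hh] using hφ n ((n : ℝ)⁻¹ • h)
    _ = φ ((n : ℝ)⁻¹ • h) / ENNReal.ofReal ‖(n : ℝ)⁻¹ • h‖ :=
        ENNReal.mul_div_mul_left _ _ (Nat.cast_ne_zero.2 hn) (natCast_ne_top n)

theorem tendsto_inv_natCast_smul_nhdsNE {h : E} (hh : h ≠ 0) :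
    Tendsto (fun n : ℕ => (n : ℝ)⁻¹ • h) atTop (𝓝[≠] 0) := by
  refine tendsto_nhdsWithin_of_tendsto_nhds_of_eventually_within _ ?_ ?_
  · simpa using
      ((tendsto_inv_atTop_zero (𝕜 := ℝ)).comp tendsto_natCast_atTop_atTop).smul_const h
  · filter_upwards [eventually_ne_atTop 0] with n hn
    simp [hn, hh]

theorem iSup_div_norm_eq_limsup_nhdsNE (hφ : ∀ (n : ℕ) h, φ (n • h) ≤ n * φ h) :
    ⨆ h : {h : E // h ≠ 0}, φ h / ENNReal.ofReal ‖h.1‖ =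
      limsup (fun h => φ h / ENNReal.ofReal ‖h‖) (𝓝[≠] 0) := by
  refine le_antisymm (iSup_le fun ⟨h, hh⟩ => ?_) ?_
  · calc φ h / ENNReal.ofReal ‖h‖
        ≤ limsup (fun n : ℕ => φ ((n : ℝ)⁻¹ • h) / ENNReal.ofReal ‖(n : ℝ)⁻¹ • h‖) atTop :=
          le_limsup_of_frequently_le' <| Eventually.frequently <|
            (eventually_ne_atTop 0).mono fun n hn =>
              div_norm_le_div_norm_inv_natCast_smul hφ h hn
      _ ≤ limsup (fun h => φ h / ENNReal.ofReal ‖h‖) (𝓝[≠] 0) :=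
          (limsup_comp (fun h => φ h / ENNReal.ofReal ‖h‖) (fun n : ℕ => (n : ℝ)⁻¹ • h)
            atTop).trans_le (limsup_le_limsup_of_le (tendsto_inv_natCast_smul_nhdsNE hh))
  · refine limsup_le_of_le (by isBoundedDefault) ?_
    filter_upwards [self_mem_nhdsWithin] with h hh
    exact le_iSup (fun h : {h : E // h ≠ 0} => φ h / ENNReal.ofReal ‖h.1‖) ⟨h, hh⟩

end DifferenceQuotient

theorem sup_eq_limsup_diff_quotient_general (N : ℕ) (p : ℝ≥0∞) (hp : 1 ≤ p)
    (f : EuclideanSpace ℝ (Fin N) → ℝ) (hf : MemLp f p volume) :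
    (⨆ h : {h : EuclideanSpace ℝ (Fin N) // h ≠ 0},
        eLpNorm (fun x => f (x + h.1) - f x) p volume / ENNReal.ofReal ‖h.1‖) =
      Filter.limsup
        (fun h : EuclideanSpace ℝ (Fin N) =>
          eLpNorm (fun x => f (x + h) - f x) p volume / ENNReal.ofReal ‖h‖)
        (𝓝[≠] (0 : EuclideanSpace ℝ (Fin N))) :=
  iSup_div_norm_eq_limsup_nhdsNE fun n h =>
    eLpNorm_translate_sub_nsmul_le hp hf.aestronglyMeasurable h n

/-- If `A := sup_{h ≠ 0} ‖f(·+h)-f‖_{L^p}/|h|` is finite, then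
`A = limsup_{|h|→0} ‖f(·+h)-f‖_{L^p}/|h|`. -/
theorem sup_eq_limsup_diff_quotient (N : ℕ) (p : ℝ≥0∞) (hp : 1 ≤ p)
    (f : EuclideanSpace ℝ (Fin N) → ℝ) (hf : MemLp f p volume)
    (hA : (⨆ h : {h : EuclideanSpace ℝ (Fin N) // h ≠ 0},
        eLpNorm (fun x => f (x + h.1) - f x) p volume / ENNReal.ofReal ‖h.1‖) < ⊤) :
    (⨆ h : {h : EuclideanSpace ℝ (Fin N) // h ≠ 0},
        eLpNorm (fun x => f (x + h.1) - f x) p volume / ENNReal.ofReal ‖h.1‖) =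
      Filter.limsup
        (fun h : EuclideanSpace ℝ (Fin N) =>
          eLpNorm (fun x => f (x + h) - f x) p volume / ENNReal.ofReal ‖h‖)
        (𝓝[≠] (0 : EuclideanSpace ℝ (Fin N))) :=
  sup_eq_limsup_diff_quotient_general N p hp f hf
end

section
/- Let $p\in[1,\infty]$, $M\in\mathbb{N}^*$, and $h_1,h_2\in\mathbb{R}^N$ with $h=h_1+h_2$. Then there is a constant $C>0$ depending only on $M$ such that for all $f\in L^p(\mathbb{R}^N)$, $\|\Delta_h^{2M}f\|_{L^p(\mathbb{R}^N)} \leq C\left(\|\Delta_{h_1}^{M}f\|_{L^p(\mathbb{R}^N)} + \|\Delta_{h_2}^{M}f\|_{L^p(\mathbb{R}^N)}\right).$ -/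
open MeasureTheory Filter Topology ENNReal Finset

/-- The `M`-th order forward finite difference
`Δ_h^M f (x) = ∑_{j=0}^M (-1)^{M-j} C(M,j) f(x + j h)`. -/
noncomputable def fdiff {N : ℕ} (M : ℕ) (h : EuclideanSpace ℝ (Fin N))
    (f : EuclideanSpace ℝ (Fin N) → ℝ) (x : EuclideanSpace ℝ (Fin N)) : ℝ :=
  ∑ j ∈ Finset.range (M + 1), (-1 : ℝ) ^ (M - j) * (M.choose j : ℝ) * f (x + (j : ℝ) • h)

/-!
Writing `S` for translation by `h₂` and `Δ₁, Δ₂` for the differences along `h₁, h₂`, the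
translation operators commute and `Δ_{h₁+h₂} = S Δ₁ + Δ₂`. Hence
`Δ_{h₁+h₂}^{2M} = ∑ₖ C(2M,k) (S Δ₁)^k Δ₂^{2M-k}`, and in each term either `k ≥ M` or
`2M - k ≥ M`, so it is a composition of `Δ₁^M` or `Δ₂^M` with `M` further operators among
`S, Δ₁, Δ₂`. Translations are isometries of `L^p` and `‖Δ_a g‖_p ≤ 2 ‖g‖_p`, so every term is
bounded by `2^M (‖Δ₁^M f‖_p + ‖Δ₂^M f‖_p)`, and summing gives the constant `2^{3M}`.
-/

open fwdDiff_aux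

section Commute

variable {α E : Type*} [AddCommMonoid α] [AddCommGroup E]

lemma shiftₗ_mul_shiftₗ (a b : α) : shiftₗ α E a * shiftₗ α E b = shiftₗ α E (a + b) :=
  LinearMap.ext fun f => funext fun x => by
    simp only [Module.End.mul_apply, shiftₗ_apply, add_assoc]

lemma commute_shiftₗ_shiftₗ (a b : α) : Commute (shiftₗ α E a) (shiftₗ α E b) := by
  rw [Commute, SemiconjBy, shiftₗ_mul_shiftₗ, shiftₗ_mul_shiftₗ, add_comm]

lemma fwdDiffₗ_eq_shiftₗ_sub_one (a : α) : fwdDiffₗ α E a = shiftₗ α E a - 1 := by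
  rw [shiftₗ, add_sub_cancel_right]

lemma commute_shiftₗ_fwdDiffₗ (a b : α) : Commute (shiftₗ α E a) (fwdDiffₗ α E b) := by
  rw [fwdDiffₗ_eq_shiftₗ_sub_one]
  exact (commute_shiftₗ_shiftₗ a b).sub_right (Commute.one_right _)

lemma commute_fwdDiffₗ_fwdDiffₗ (a b : α) : Commute (fwdDiffₗ α E a) (fwdDiffₗ α E b) := by
  rw [fwdDiffₗ_eq_shiftₗ_sub_one a]
  exact (commute_shiftₗ_fwdDiffₗ a b).sub_left (Commute.one_left _)

lemma fwdDiffₗ_add (a b : α) :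
    fwdDiffₗ α E (a + b) = shiftₗ α E b * fwdDiffₗ α E a + fwdDiffₗ α E b := by
  simp only [fwdDiffₗ_eq_shiftₗ_sub_one, mul_sub, mul_one, shiftₗ_mul_shiftₗ, add_comm b a]
  abel

lemma fwdDiffₗ_add_pow (a b : α) (n : ℕ) :
    fwdDiffₗ α E (a + b) ^ n = ∑ k ∈ range (n + 1),
      (shiftₗ α E b * fwdDiffₗ α E a) ^ k * fwdDiffₗ α E b ^ (n - k) *
        (n.choose k : Module.End ℤ (α → E)) := by
  rw [fwdDiffₗ_add]
  exact ((commute_shiftₗ_fwdDiffₗ b b).mul_left (commute_fwdDiffₗ_fwdDiffₗ a b)).add_pow n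

end Commute

section LpBounded

variable {α E : Type*} [MeasurableSpace α] [NormedAddCommGroup E] {p : ℝ≥0∞} {μ : Measure α}

def LpBoundedBy (p : ℝ≥0∞) (μ : Measure α) (T : Module.End ℤ (α → E)) (c : ℝ≥0∞) : Prop :=
  ∀ g : α → E, AEStronglyMeasurable g μ →
    AEStronglyMeasurable (T g) μ ∧ eLpNorm (T g) p μ ≤ c * eLpNorm g p μ

namespace LpBoundedBy

variable {S T : Module.End ℤ (α → E)} {c d : ℝ≥0∞}

lemma one : LpBoundedBy p μ (1 : Module.End ℤ (α → E)) 1 :=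
  fun _ hg => ⟨hg, (one_mul _).ge⟩

lemma mul (hS : LpBoundedBy p μ S c) (hT : LpBoundedBy p μ T d) :
    LpBoundedBy p μ (S * T) (c * d) := fun g hg =>
  have hTg := hT g hg
  have hSTg := hS (T g) hTg.1
  ⟨hSTg.1, hSTg.2.trans <| by rw [mul_assoc]; gcongr; exact hTg.2⟩

lemma pow (hT : LpBoundedBy p μ T c) (n : ℕ) : LpBoundedBy p μ (T ^ n) (c ^ n) := by
  induction n with
  | zero => simpa only [pow_zero] using one
  | succ n ih => simpa only [pow_succ] using ih.mul hT

lemma sub (hp : 1 ≤ p) (hS : LpBoundedBy p μ S c) (hT : LpBoundedBy p μ T d) :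
    LpBoundedBy p μ (S - T) (c + d) := fun g hg =>
  have hSg := hS g hg
  have hTg := hT g hg
  ⟨hSg.1.sub hTg.1, (eLpNorm_sub_le hSg.1 hTg.1 hp).trans <| by
    rw [add_mul]; exact add_le_add hSg.2 hTg.2⟩

lemma eLpNorm_mul_apply_le (hS : LpBoundedBy p μ S c) (hT : LpBoundedBy p μ T d) {g : α → E}
    (hg : AEStronglyMeasurable g μ) :
    eLpNorm ((S * T) g) p μ ≤ c * eLpNorm (T g) p μ :=
  (hS (T g) (hT g hg).1).2

end LpBoundedBy

variable [AddCommMonoid α] [MeasurableAdd α] [μ.IsAddRightInvariant]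

lemma lpBoundedBy_shiftₗ (a : α) : LpBoundedBy p μ (shiftₗ α E a) 1 := fun g hg => by
  have hshift := measurePreserving_add_right μ a
  have hg_shift : shiftₗ α E a g = g ∘ (· + a) := funext (shiftₗ_apply a g)
  rw [hg_shift, one_mul, eLpNorm_comp_measurePreserving hg hshift]
  exact ⟨hg.comp_measurePreserving hshift, le_rfl⟩

lemma lpBoundedBy_fwdDiffₗ (hp : 1 ≤ p) (a : α) : LpBoundedBy p μ (fwdDiffₗ α E a) 2 := by
  rw [fwdDiffₗ_eq_shiftₗ_sub_one, ← one_add_one_eq_two]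
  exact (lpBoundedBy_shiftₗ a).sub hp LpBoundedBy.one

end LpBounded

section SecondOrderSplitting

variable {α E : Type*} [MeasurableSpace α] [NormedAddCommGroup E] {p : ℝ≥0∞} {μ : Measure α}
  [AddCommMonoid α] [MeasurableAdd α] [μ.IsAddRightInvariant]
  {f : α → E} (hp : 1 ≤ p) (hf : AEStronglyMeasurable f μ) (a b : α)

include hp hf

lemma eLpNorm_shiftₗ_mul_fwdDiffₗ_pow_mul_le_left (i k j : ℕ) :
    eLpNorm (((shiftₗ α E b * fwdDiffₗ α E a) ^ (k + i) * fwdDiffₗ α E b ^ j) f) p μ ≤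
      2 ^ (k + j) * eLpNorm ((fwdDiffₗ α E a ^ i) f) p μ := by
  have hS := lpBoundedBy_shiftₗ (E := E) (p := p) (μ := μ) b
  have hD₁ := lpBoundedBy_fwdDiffₗ (E := E) (μ := μ) hp a
  have hD₂ := lpBoundedBy_fwdDiffₗ (E := E) (μ := μ) hp b
  have hfactor : (shiftₗ α E b * fwdDiffₗ α E a) ^ (k + i) * fwdDiffₗ α E b ^ j =
      (shiftₗ α E b * fwdDiffₗ α E a) ^ k * shiftₗ α E b ^ i * fwdDiffₗ α E b ^ j *
        fwdDiffₗ α E a ^ i := by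
    rw [pow_add, (commute_shiftₗ_fwdDiffₗ b a).mul_pow i]
    simp only [mul_assoc, ((commute_fwdDiffₗ_fwdDiffₗ (E := E) a b).pow_pow i j).eq]
  have hbound := (((hS.mul hD₁).pow k).mul (hS.pow i)).mul (hD₂.pow j)
  rw [one_mul, one_pow, mul_one, ← pow_add] at hbound
  rw [hfactor]
  exact hbound.eLpNorm_mul_apply_le (hD₁.pow i) hf

lemma eLpNorm_shiftₗ_mul_fwdDiffₗ_pow_mul_le_right (i k j : ℕ) :
    eLpNorm (((shiftₗ α E b * fwdDiffₗ α E a) ^ k * fwdDiffₗ α E b ^ (j + i)) f) p μ ≤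
      2 ^ (k + j) * eLpNorm ((fwdDiffₗ α E b ^ i) f) p μ := by
  have hS := lpBoundedBy_shiftₗ (E := E) (p := p) (μ := μ) b
  have hD₁ := lpBoundedBy_fwdDiffₗ (E := E) (μ := μ) hp a
  have hD₂ := lpBoundedBy_fwdDiffₗ (E := E) (μ := μ) hp b
  have hbound := ((hS.mul hD₁).pow k).mul (hD₂.pow j)
  rw [one_mul, ← pow_add] at hbound
  rw [pow_add, ← mul_assoc]
  exact hbound.eLpNorm_mul_apply_le (hD₂.pow i) hf

lemma eLpNorm_shiftₗ_mul_fwdDiffₗ_pow_mul_le {M k : ℕ} (hk : k ≤ 2 * M) :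
    eLpNorm (((shiftₗ α E b * fwdDiffₗ α E a) ^ k * fwdDiffₗ α E b ^ (2 * M - k)) f) p μ ≤
      2 ^ M * (eLpNorm ((fwdDiffₗ α E a ^ M) f) p μ + eLpNorm ((fwdDiffₗ α E b ^ M) f) p μ) := by
  rcases le_or_gt M k with hMk | hkM
  · obtain ⟨i, rfl⟩ := Nat.exists_eq_add_of_le' hMk
    calc _ ≤ 2 ^ (i + (2 * M - (i + M))) * eLpNorm ((fwdDiffₗ α E a ^ M) f) p μ :=
          eLpNorm_shiftₗ_mul_fwdDiffₗ_pow_mul_le_left hp hf a b M i _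
      _ = 2 ^ M * eLpNorm ((fwdDiffₗ α E a ^ M) f) p μ := by congr 2; omega
      _ ≤ _ := by gcongr; exact le_self_add
  · calc _ = eLpNorm (((shiftₗ α E b * fwdDiffₗ α E a) ^ k * fwdDiffₗ α E b ^ (M - k + M)) f)
            p μ := by congr 4; omega
      _ ≤ 2 ^ (k + (M - k)) * eLpNorm ((fwdDiffₗ α E b ^ M) f) p μ :=
          eLpNorm_shiftₗ_mul_fwdDiffₗ_pow_mul_le_right hp hf a b M k _
      _ = 2 ^ M * eLpNorm ((fwdDiffₗ α E b ^ M) f) p μ := by congr 2; omega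
      _ ≤ _ := by gcongr; exact le_add_self

theorem eLpNorm_fwdDiffₗ_add_pow_two_mul_le [NormedSpace ℝ E] (M : ℕ) :
    eLpNorm ((fwdDiffₗ α E (a + b) ^ (2 * M)) f) p μ ≤
      2 ^ (3 * M) *
        (eLpNorm ((fwdDiffₗ α E a ^ M) f) p μ + eLpNorm ((fwdDiffₗ α E b ^ M) f) p μ) := by
  set T : ℕ → Module.End ℤ (α → E) := fun k =>
    (shiftₗ α E b * fwdDiffₗ α E a) ^ k * fwdDiffₗ α E b ^ (2 * M - k)
  have hT_meas (k : ℕ) : AEStronglyMeasurable (T k f) μ :=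
    ((((lpBoundedBy_shiftₗ b).mul (lpBoundedBy_fwdDiffₗ hp a)).pow k).mul
      ((lpBoundedBy_fwdDiffₗ hp b).pow _) f hf).1
  calc eLpNorm ((fwdDiffₗ α E (a + b) ^ (2 * M)) f) p μ
      = eLpNorm (∑ k ∈ range (2 * M + 1), (2 * M).choose k • T k f) p μ := by
        simp only [fwdDiffₗ_add_pow, LinearMap.sum_apply, Module.End.mul_apply,
          Module.End.natCast_apply, map_nsmul, T]
    _ ≤ ∑ k ∈ range (2 * M + 1), ((2 * M).choose k : ℝ≥0∞) * eLpNorm (T k f) p μ := by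
        simpa only [eLpNorm_nsmul] using
          eLpNorm_sum_le (fun k _ => (hT_meas k).const_smul ((2 * M).choose k)) hp
    _ ≤ ∑ k ∈ range (2 * M + 1), ((2 * M).choose k : ℝ≥0∞) * (2 ^ M *
          (eLpNorm ((fwdDiffₗ α E a ^ M) f) p μ + eLpNorm ((fwdDiffₗ α E b ^ M) f) p μ)) := by
        gcongr with k hk
        exact eLpNorm_shiftₗ_mul_fwdDiffₗ_pow_mul_le hp hf a b (mem_range_succ_iff.mp hk)
    _ = _ := by
        rw [← sum_mul, ← Nat.cast_sum, Nat.sum_range_choose, ← mul_assoc,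
          show 3 * M = 2 * M + M by ring, pow_add, Nat.cast_pow, Nat.cast_ofNat]

end SecondOrderSplitting

lemma fdiff_eq_fwdDiffₗ_pow {N : ℕ} (M : ℕ) (h : EuclideanSpace ℝ (Fin N))
    (f : EuclideanSpace ℝ (Fin N) → ℝ) : fdiff M h f = (fwdDiffₗ _ ℝ h ^ M) f := by
  funext x
  rw [coe_fwdDiffₗ_pow, fwdDiff_iter_eq_sum_shift, fdiff]
  refine sum_congr rfl fun j _ => ?_
  rw [Nat.cast_smul_eq_nsmul, zsmul_eq_mul]
  push_cast
  ring

theorem fdiff_two_M_le_general (N M : ℕ) :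
    ∃ C : ℝ, 0 < C ∧ ∀ (p : ℝ≥0∞), 1 ≤ p →
      ∀ (f : EuclideanSpace ℝ (Fin N) → ℝ), MemLp f p volume →
        ∀ h₁ h₂ : EuclideanSpace ℝ (Fin N),
          eLpNorm (fdiff (2 * M) (h₁ + h₂) f) p volume ≤
            ENNReal.ofReal C *
              (eLpNorm (fdiff M h₁ f) p volume + eLpNorm (fdiff M h₂ f) p volume) := by
  refine ⟨2 ^ (3 * M), by positivity, fun p hp f hf h₁ h₂ => ?_⟩
  simp only [fdiff_eq_fwdDiffₗ_pow, ENNReal.ofReal_pow zero_le_two, ENNReal.ofReal_ofNat]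
  exact eLpNorm_fwdDiffₗ_add_pow_two_mul_le hp hf.aestronglyMeasurable h₁ h₂ M

/-- If `h = h₁ + h₂`, then `‖Δ_h^{2M} f‖_{L^p} ≤ C (‖Δ_{h₁}^M f‖_{L^p} + ‖Δ_{h₂}^M f‖_{L^p})`
with `C` depending only on `M`. -/
theorem fdiff_two_M_le (N M : ℕ) (hM : 1 ≤ M) :
    ∃ C : ℝ, 0 < C ∧ ∀ (p : ℝ≥0∞), 1 ≤ p →
      ∀ (f : EuclideanSpace ℝ (Fin N) → ℝ), MemLp f p volume →
        ∀ h₁ h₂ : EuclideanSpace ℝ (Fin N),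
          eLpNorm (fdiff (2 * M) (h₁ + h₂) f) p volume ≤
            ENNReal.ofReal C *
              (eLpNorm (fdiff M h₁ f) p volume + eLpNorm (fdiff M h₂ f) p volume) :=
  fdiff_two_M_le_general N M
end

section
/- Let $M\in\mathbb{N}^*$, $s\in(0,M)$ and $p\in[1,\infty]$. There is a constant $C(s,M)>0$ such that for all $f\in L^p(\mathbb{R}^N)$, $\sup_{h\neq 0}\frac{\|\Delta_h^M f\|_{L^p(\mathbb{R}^N)}}{|h|^s} \leq C(s,M)\,\sup_{h\neq 0}\frac{\|\Delta_h^{2M} f\|_{L^p(\mathbb{R}^N)}}{|h|^s}.$ -/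
open MeasureTheory Filter Topology ENNReal Finset

/-!
Since `Δ_{2h} = Δ_h (Δ_h + 2)`, the binomial theorem writes `2^m Δ_h^m f` as `Δ_{2h}^m f` minus a
combination of `Δ_h^{m+k} f`, `k ≥ 1`, whose `L^p` norms are all `≲ ‖Δ_h^{m+1} f‖_p` (a Marchaud
inequality). Writing `[f]_m` for the seminorm with differences of order `m`, iterating along the
dyadic steps `h, 2h, 4h, …` gives
`‖Δ_h^m f‖_p ≤ 2^{-mn} ‖Δ_{2^n h}^m f‖_p + C |h|^s [f]_{m+1} ∑_{i<n} 2^{(s-m)i}`.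
The first term tends to `0` because `‖Δ^m f‖_p ≤ 2^m ‖f‖_p < ∞`, and the series converges since
`s < m`; hence `[f]_m ≤ C_m [f]_{m+1}` for every order `m > s`, and the steps `m = M, …, 2M - 1`
chain to the theorem.
-/

open Function fwdDiff_aux

section Algebra

variable {A G : Type*} [AddCommMonoid A] [AddCommGroup G]

lemma fwdDiffₗ_add_self (h : A) :
    fwdDiffₗ A G (h + h) = fwdDiffₗ A G h * (fwdDiffₗ A G h + 2) := by
  ext f x
  simp only [Module.End.mul_apply, LinearMap.add_apply, fwdDiffₗ_apply, fwdDiff,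
    Module.End.ofNat_apply, Pi.add_apply, Pi.smul_apply, ← add_assoc]
  rw [two_smul, two_smul]
  abel

theorem fwdDiff_add_self_iter (h : A) (f : A → G) (m : ℕ) :
    (fwdDiff (h + h))^[m] f =
      ∑ k ∈ range (m + 1), (2 ^ (m - k) * m.choose k) • (fwdDiff h)^[m + k] f := by
  set D := fwdDiffₗ A G h
  have hD : Commute D (D + 2) := (Commute.refl D).add_right (Commute.ofNat_right D 2)
  rw [← coe_fwdDiffₗ_pow, fwdDiffₗ_add_self, hD.mul_pow, (Commute.ofNat_right D 2).add_pow,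
    mul_sum, LinearMap.sum_apply]
  refine sum_congr rfl fun k _ => ?_
  rw [← mul_assoc, ← mul_assoc, ← pow_add, ← coe_fwdDiffₗ_pow, mul_assoc, Module.End.mul_apply,
    show (2 ^ (m - k) * m.choose k : Module.End ℤ (A → G)) =
      ((2 ^ (m - k) * m.choose k : ℕ) : Module.End ℤ (A → G)) by push_cast; rfl,
    Module.End.natCast_apply, map_nsmul]

end Algebra

def marchaudCoeff (m : ℕ) : ℕ :=
  ∑ k ∈ range m, 2 ^ (m - (k + 1)) * m.choose (k + 1) * 2 ^ k

section Translation

variable {E F : Type*} [AddCommGroup E] [MeasurableSpace E] [MeasurableAdd E] {μ : Measure E}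
  [μ.IsAddRightInvariant] [NormedAddCommGroup F] {f : E → F} {p : ℝ≥0∞}

theorem MeasureTheory.AEStronglyMeasurable.fwdDiff_iter (hf : AEStronglyMeasurable f μ) (h : E)
    (n : ℕ) : AEStronglyMeasurable ((fwdDiff h)^[n] f) μ := by
  induction n with
  | zero => exact hf
  | succ n ih =>
    rw [iterate_succ_apply']
    exact (ih.comp_measurePreserving (measurePreserving_add_right μ h)).sub ih

theorem eLpNorm_fwdDiff_le (hf : AEStronglyMeasurable f μ) (hp : 1 ≤ p) (h : E) :
    eLpNorm (fwdDiff h f) p μ ≤ 2 * eLpNorm f p μ := by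
  have hshift : MeasurePreserving (· + h) μ μ := measurePreserving_add_right μ h
  calc eLpNorm (fwdDiff h f) p μ ≤ eLpNorm (f ∘ (· + h)) p μ + eLpNorm f p μ :=
        eLpNorm_sub_le (hf.comp_measurePreserving hshift) hf hp
    _ = 2 * eLpNorm f p μ := by rw [eLpNorm_comp_measurePreserving hf hshift, two_mul]

theorem eLpNorm_fwdDiff_iter_le (hf : AEStronglyMeasurable f μ) (hp : 1 ≤ p) (h : E) (n : ℕ) :
    eLpNorm ((fwdDiff h)^[n] f) p μ ≤ 2 ^ n * eLpNorm f p μ := by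
  induction n with
  | zero => simp
  | succ n ih =>
    rw [iterate_succ_apply', pow_succ', mul_assoc]
    exact (eLpNorm_fwdDiff_le (hf.fwdDiff_iter h n) hp h).trans (by gcongr)

theorem two_pow_mul_eLpNorm_fwdDiff_iter_le [NormedSpace ℝ F] (hf : AEStronglyMeasurable f μ)
    (hp : 1 ≤ p) (h : E) (m : ℕ) :
    2 ^ m * eLpNorm ((fwdDiff h)^[m] f) p μ ≤ eLpNorm ((fwdDiff (h + h))^[m] f) p μ +
      marchaudCoeff m * eLpNorm ((fwdDiff h)^[m + 1] f) p μ := by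
  set c : ℕ → ℕ := fun k => 2 ^ (m - (k + 1)) * m.choose (k + 1)
  have hexp := fwdDiff_add_self_iter h f m
  rw [sum_range_succ', Nat.sub_zero, Nat.choose_zero_right, mul_one, add_zero] at hexp
  have hterm : ∀ k ∈ range m, eLpNorm (c k • (fwdDiff h)^[m + (k + 1)] f) p μ ≤
      (c k * 2 ^ k : ℕ) * eLpNorm ((fwdDiff h)^[m + 1] f) p μ := by
    intro k _
    rw [eLpNorm_nsmul, show m + (k + 1) = k + (m + 1) by omega, iterate_add_apply,
      Nat.cast_mul (c k), mul_assoc]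
    exact mul_le_mul_right
      (by exact_mod_cast eLpNorm_fwdDiff_iter_le (hf.fwdDiff_iter h _) hp h k) _
  calc 2 ^ m * eLpNorm ((fwdDiff h)^[m] f) p μ = eLpNorm (2 ^ m • (fwdDiff h)^[m] f) p μ := by
        rw [eLpNorm_nsmul]; push_cast; rfl
    _ = eLpNorm ((fwdDiff (h + h))^[m] f -
          ∑ k ∈ range m, c k • (fwdDiff h)^[m + (k + 1)] f) p μ := by
        rw [eq_sub_of_add_eq' hexp.symm]
    _ ≤ eLpNorm ((fwdDiff (h + h))^[m] f) p μ +
          ∑ k ∈ range m, eLpNorm (c k • (fwdDiff h)^[m + (k + 1)] f) p μ :=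
        (eLpNorm_sub_le (hf.fwdDiff_iter _ m) (Finset.aestronglyMeasurable_sum _
          fun k _ => (hf.fwdDiff_iter h _).const_smul _) hp).trans
          (by gcongr; exact eLpNorm_sum_le (fun k _ => (hf.fwdDiff_iter h _).const_smul _) hp)
    _ ≤ _ := by
        grw [sum_le_sum hterm, ← sum_mul, ← Nat.cast_sum, marchaudCoeff]

end Translation

theorem ENNReal.le_mul_inv_of_le_mul_succ_add_mul_pow {a : ℕ → ℝ≥0∞} {B r q c : ℝ≥0∞}
    (haB : ∀ n, a n ≤ B) (hB : B ≠ ∞) (hr : r < 1)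
    (ha : ∀ n, a n ≤ r * a (n + 1) + c * q ^ n) : a 0 ≤ c * (1 - r * q)⁻¹ := by
  have hiter : ∀ n, a 0 ≤ r ^ n * a n + c * ∑ i ∈ range n, (r * q) ^ i := by
    intro n
    induction n with
    | zero => simp
    | succ n ih =>
      calc a 0 ≤ r ^ n * a n + c * ∑ i ∈ range n, (r * q) ^ i := ih
        _ ≤ r ^ n * (r * a (n + 1) + c * q ^ n) + c * ∑ i ∈ range n, (r * q) ^ i := by
          grw [ha n]
        _ = r ^ (n + 1) * a (n + 1) + c * ∑ i ∈ range (n + 1), (r * q) ^ i := by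
          rw [sum_range_succ, mul_pow]; ring
  have hlim : Tendsto (fun n => r ^ n * B + c * (1 - r * q)⁻¹) atTop
      (𝓝 (0 * B + c * (1 - r * q)⁻¹)) :=
    (ENNReal.Tendsto.mul_const (ENNReal.tendsto_pow_atTop_nhds_zero_of_lt_one hr)
      (.inr hB)).add tendsto_const_nhds
  rw [zero_mul, zero_add] at hlim
  refine ge_of_tendsto' hlim fun n => (hiter n).trans ?_
  grw [haB n, ENNReal.sum_le_tsum, ENNReal.tsum_geometric]

section Besov

variable {E F : Type*} [NormedAddCommGroup E] [MeasurableSpace E] {μ : Measure E}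
  [NormedAddCommGroup F] {f : E → F} {m : ℕ} {s : ℝ} {p : ℝ≥0∞}

noncomputable def besovSeminorm (m : ℕ) (s : ℝ) (p : ℝ≥0∞) (μ : Measure E) (f : E → F) : ℝ≥0∞ :=
  ⨆ h : {h : E // h ≠ 0}, eLpNorm ((fwdDiff h.1)^[m] f) p μ / ENNReal.ofReal (‖h.1‖ ^ s)

theorem eLpNorm_fwdDiff_iter_le_besovSeminorm_mul {h : E} (hh : h ≠ 0) :
    eLpNorm ((fwdDiff h)^[m] f) p μ ≤ besovSeminorm m s p μ f * ENNReal.ofReal (‖h‖ ^ s) := by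
  rw [← ENNReal.div_le_iff (by positivity) ofReal_ne_top]
  exact le_iSup (fun h : {h : E // h ≠ 0} =>
    eLpNorm ((fwdDiff h.1)^[m] f) p μ / ENNReal.ofReal (‖h.1‖ ^ s)) ⟨h, hh⟩

/-- The factor `(1 - 2^{s-m})⁻¹` sums the dyadic scales; it is `∞` unless `s < m`. -/
noncomputable def marchaudConst (m : ℕ) (s : ℝ) : ℝ≥0∞ :=
  marchaudCoeff m * (2 ^ m)⁻¹ * (1 - (2 ^ m)⁻¹ * ENNReal.ofReal (2 ^ s))⁻¹

theorem marchaudConst_ne_top (hsm : s < m) : marchaudConst m s ≠ ∞ := by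
  refine mul_ne_top (mul_ne_top (natCast_ne_top _) (by simp)) (inv_ne_top.2 ?_)
  refine (tsub_pos_of_lt ?_).ne'
  rw [mul_comm, ← div_eq_mul_inv, ENNReal.div_lt_iff (by simp) (by simp), one_mul,
    ← ofReal_ofNat 2, ← ENNReal.ofReal_pow zero_le_two, ofReal_lt_ofReal_iff (by positivity),
    ← Real.rpow_natCast]
  exact Real.rpow_lt_rpow_of_exponent_lt one_lt_two hsm

variable [NormedSpace ℝ E] [MeasurableAdd E] [μ.IsAddRightInvariant] [NormedSpace ℝ F]

theorem besovSeminorm_le_marchaudConst_mul (hm : 1 ≤ m) (hp : 1 ≤ p) (hf : MemLp f p μ) :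
    besovSeminorm m s p μ f ≤ marchaudConst m s * besovSeminorm (m + 1) s p μ f := by
  refine iSup_le fun ⟨h, hh⟩ => ?_
  rw [ENNReal.div_le_iff (by positivity) ofReal_ne_top]
  set A := besovSeminorm (m + 1) s p μ f
  set r : ℝ≥0∞ := (2 ^ m)⁻¹
  set q := ENNReal.ofReal (2 ^ s)
  set hn : ℕ → E := fun n => (2 ^ n : ℝ) • h
  have hr : r < 1 := ENNReal.inv_lt_one.2 (one_lt_pow₀ one_lt_two (by omega))
  have hnorm : ∀ n, ENNReal.ofReal (‖hn n‖ ^ s) = q ^ n * ENNReal.ofReal (‖h‖ ^ s) := by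
    intro n
    rw [norm_smul, Real.norm_of_nonneg (by positivity),
      Real.mul_rpow (by positivity) (by positivity), ← Real.rpow_pow_comm zero_le_two,
      ENNReal.ofReal_mul (by positivity), ENNReal.ofReal_pow (by positivity)]
  have hstep : ∀ n, eLpNorm ((fwdDiff (hn n))^[m] f) p μ ≤
      r * eLpNorm ((fwdDiff (hn (n + 1)))^[m] f) p μ +
        (marchaudCoeff m * r * (A * ENNReal.ofReal (‖h‖ ^ s))) * q ^ n := by
    intro n
    have hdouble : hn n + hn n = hn (n + 1) := by simp only [hn, ← add_smul, pow_succ]; ring_nf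
    have hmarchaud := two_pow_mul_eLpNorm_fwdDiff_iter_le hf.aestronglyMeasurable hp (hn n) m
    have hA := eLpNorm_fwdDiff_iter_le_besovSeminorm_mul (m := m + 1) (s := s) (f := f) (p := p)
      (μ := μ) (smul_ne_zero (by positivity) hh : hn n ≠ 0)
    rw [hdouble] at hmarchaud
    rw [hnorm] at hA
    calc eLpNorm ((fwdDiff (hn n))^[m] f) p μ
        = r * (2 ^ m * eLpNorm ((fwdDiff (hn n))^[m] f) p μ) := by
          rw [← mul_assoc, ENNReal.inv_mul_cancel (by simp) (by simp), one_mul]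
      _ ≤ _ := by grw [hmarchaud, hA]
      _ = _ := by ring
  have hgeom := ENNReal.le_mul_inv_of_le_mul_succ_add_mul_pow
    (fun n => eLpNorm_fwdDiff_iter_le hf.aestronglyMeasurable hp (hn n) m)
    (mul_ne_top (by simp) hf.eLpNorm_ne_top) hr hstep
  simp only [hn, pow_zero, one_smul] at hgeom
  refine hgeom.trans (le_of_eq ?_)
  simp only [marchaudConst]
  ring

theorem besovSeminorm_le_prod_marchaudConst_mul (hm : 1 ≤ m) (hp : 1 ≤ p) (hf : MemLp f p μ)
    (n : ℕ) : besovSeminorm m s p μ f ≤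
      (∏ k ∈ range n, marchaudConst (m + k) s) * besovSeminorm (m + n) s p μ f := by
  induction n with
  | zero => simp
  | succ n ih =>
    calc besovSeminorm m s p μ f
        ≤ (∏ k ∈ range n, marchaudConst (m + k) s) * besovSeminorm (m + n) s p μ f := ih
      _ ≤ (∏ k ∈ range n, marchaudConst (m + k) s) *
          (marchaudConst (m + n) s * besovSeminorm (m + n + 1) s p μ f) := by
        grw [besovSeminorm_le_marchaudConst_mul (by omega) hp hf]
      _ = _ := by rw [prod_range_succ, mul_assoc, add_assoc]

end Besov

lemma fdiff_eq_fwdDiff {N : ℕ} (M : ℕ) (h : EuclideanSpace ℝ (Fin N))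
    (f : EuclideanSpace ℝ (Fin N) → ℝ) : fdiff M h f = (fwdDiff h)^[M] f := by
  funext x
  rw [fwdDiff_iter_eq_sum_shift]
  refine sum_congr rfl fun j _ => ?_
  rw [zsmul_eq_mul, ← Nat.cast_smul_eq_nsmul ℝ]
  push_cast
  ring

theorem fdiff_M_le_two_M_general (N M : ℕ) (hM : 1 ≤ M) (s : ℝ) (hsM : s < M) :
    ∃ C : ℝ, 0 < C ∧ ∀ (p : ℝ≥0∞), 1 ≤ p →
      ∀ (f : EuclideanSpace ℝ (Fin N) → ℝ), MemLp f p volume →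
        (⨆ h : {h : EuclideanSpace ℝ (Fin N) // h ≠ 0},
            eLpNorm (fdiff M h.1 f) p volume / ENNReal.ofReal (‖h.1‖ ^ s)) ≤
          ENNReal.ofReal C *
            (⨆ h : {h : EuclideanSpace ℝ (Fin N) // h ≠ 0},
              eLpNorm (fdiff (2 * M) h.1 f) p volume / ENNReal.ofReal (‖h.1‖ ^ s)) := by
  set K := ∏ k ∈ range M, marchaudConst (M + k) s
  have hK : K ≠ ∞ := prod_ne_top fun k _ => marchaudConst_ne_top (by push_cast; linarith)
  refine ⟨K.toReal + 1, by positivity, fun p hp f hf => ?_⟩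
  simp only [fdiff_eq_fwdDiff]
  calc besovSeminorm M s p volume f ≤ K * besovSeminorm (M + M) s p volume f :=
        besovSeminorm_le_prod_marchaudConst_mul hM hp hf M
    _ ≤ ENNReal.ofReal (K.toReal + 1) * besovSeminorm (2 * M) s p volume f := by
        rw [← two_mul]
        gcongr
        exact (le_ofReal_iff_toReal_le hK (by positivity)).2 (by linarith)

/-- For `s ∈ (0,M)`, the `M`-th order Besov–Nikol'skii seminorm is controlled by the
`2M`-th order one:
`sup_{h≠0} ‖Δ_h^M f‖_{L^p}/|h|^s ≤ C(s,M) sup_{h≠0} ‖Δ_h^{2M} f‖_{L^p}/|h|^s`. -/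
theorem fdiff_M_le_two_M (N M : ℕ) (hM : 1 ≤ M) (s : ℝ) (hs0 : 0 < s) (hsM : s < M) :
    ∃ C : ℝ, 0 < C ∧ ∀ (p : ℝ≥0∞), 1 ≤ p →
      ∀ (f : EuclideanSpace ℝ (Fin N) → ℝ), MemLp f p volume →
        (⨆ h : {h : EuclideanSpace ℝ (Fin N) // h ≠ 0},
            eLpNorm (fdiff M h.1 f) p volume / ENNReal.ofReal (‖h.1‖ ^ s)) ≤
          ENNReal.ofReal C *
            (⨆ h : {h : EuclideanSpace ℝ (Fin N) // h ≠ 0},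
              eLpNorm (fdiff (2 * M) h.1 f) p volume / ENNReal.ofReal (‖h.1‖ ^ s)) :=
  fdiff_M_le_two_M_general N M hM s hsM
end

section
/- Let $(u_j)_{j\geq 0}$ be defined by $u_j=k$ if $j=2^k$ for some $k\in\mathbb{N}$ and $u_j=0$ otherwise. Then $(u_j)$ is unbounded, yet $\sup_{\varepsilon>0}\,\varepsilon\sum_{j\geq 0}2^{-j\varepsilon}u_j \leq \frac{2}{e\ln 2}$. -/
/-!
Only the terms at `j = 2 ^ k` survive. By `y e^{-y} ≤ e^{-1}` applied to `y = 2^k ε ln 2`, the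
`k`-th of them is at most `k 2^{-k} / (e ln 2)`, and `∑ k 2^{-k} = 2`.
-/

lemma Real.mul_rpow_neg_le {b : ℝ} (hb : 1 < b) (x : ℝ) :
    x * b ^ (-x) ≤ Real.exp (-1) / Real.log b := by
  have hlog : 0 < Real.log b := Real.log_pos hb
  rw [le_div_iff₀ hlog, Real.rpow_def_of_pos (by linarith)]
  calc x * Real.exp (Real.log b * -x) * Real.log b
      = x * Real.log b * Real.exp (-(x * Real.log b)) := by ring_nf
    _ ≤ Real.exp (-1) := Real.mul_exp_neg_le_exp_neg_one _

lemma tsum_eq_tsum_comp_pow {α : Type*} [AddCommMonoid α] [TopologicalSpace α]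
    {b : ℕ} (hb : 2 ≤ b) {f : ℕ → α} (hf : ∀ j, (∀ k, j ≠ b ^ k) → f j = 0) :
    ∑' j, f j = ∑' k, f (b ^ k) := by
  refine ((Nat.pow_right_injective hb).tsum_eq fun j hj => ?_).symm
  by_contra hjb
  exact hj (hf j fun k hk => hjb ⟨k, hk.symm⟩)

lemma hasSum_nat_mul_half_pow : HasSum (fun k : ℕ => (k : ℝ) * (1 / 2) ^ k) 2 := by
  have h := hasSum_coe_mul_geometric_of_norm_lt_one (r := (1 / 2 : ℝ)) (by norm_num)
  norm_num at h ⊢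
  exact h

lemma dyadic_term_le (ε : ℝ) (k : ℕ) :
    ε * Real.rpow 2 (-((2 ^ k : ℕ) : ℝ) * ε) * k
      ≤ Real.exp (-1) / Real.log 2 * ((k : ℝ) * (1 / 2) ^ k) := by
  have h := Real.mul_rpow_neg_le one_lt_two ((2 : ℝ) ^ k * ε)
  have hpow : (0 : ℝ) < 2 ^ k := by positivity
  have hterm : ε * Real.rpow 2 (-((2 ^ k : ℕ) : ℝ) * ε)
      ≤ Real.exp (-1) / Real.log 2 * (1 / 2) ^ k := by
    rw [one_div_pow, mul_one_div, le_div_iff₀ hpow]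
    refine le_of_eq_of_le ?_ h
    rw [Real.rpow_eq_pow]
    push_cast
    ring_nf
  calc ε * Real.rpow 2 (-((2 ^ k : ℕ) : ℝ) * ε) * k
      ≤ Real.exp (-1) / Real.log 2 * (1 / 2) ^ k * k :=
        mul_le_mul_of_nonneg_right hterm k.cast_nonneg
    _ = Real.exp (-1) / Real.log 2 * ((k : ℝ) * (1 / 2) ^ k) := by ring

/-- The sequence `u_j = k` if `j = 2^k` and `u_j = 0` otherwise is unbounded, yet
`sup_{ε>0} ε ∑_{j≥0} 2^{-jε} u_j ≤ 2/(e ln 2)`. -/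
theorem unbounded_cesaro (u : ℕ → ℝ)
    (hu1 : ∀ k : ℕ, u (2 ^ k) = (k : ℝ))
    (hu2 : ∀ j : ℕ, (∀ k : ℕ, j ≠ 2 ^ k) → u j = 0) :
    ¬ BddAbove (Set.range u) ∧
      ∀ ε : ℝ, 0 < ε →
        (∑' j : ℕ, ENNReal.ofReal (ε * Real.rpow 2 (-(j : ℝ) * ε) * u j)) ≤
          ENNReal.ofReal (2 / (Real.exp 1 * Real.log 2)) := by
  refine ⟨fun ⟨M, hM⟩ => ?_, fun ε _ => ?_⟩
  · obtain ⟨k, hk⟩ := exists_nat_gt M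
    exact hk.not_ge (hu1 k ▸ hM (Set.mem_range_self (2 ^ k)))
  set C := Real.exp (-1) / Real.log 2 with hC
  have hsum : HasSum (fun k : ℕ => C * ((k : ℝ) * (1 / 2) ^ k)) (C * 2) :=
    hasSum_nat_mul_half_pow.mul_left C
  calc ∑' j : ℕ, ENNReal.ofReal (ε * Real.rpow 2 (-(j : ℝ) * ε) * u j)
      = ∑' k : ℕ, ENNReal.ofReal (ε * Real.rpow 2 (-((2 ^ k : ℕ) : ℝ) * ε) * u (2 ^ k)) :=
        tsum_eq_tsum_comp_pow le_rfl fun j hj => by simp [hu2 j hj]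
    _ ≤ ∑' k : ℕ, ENNReal.ofReal (C * ((k : ℝ) * (1 / 2) ^ k)) :=
        ENNReal.tsum_le_tsum fun k => ENNReal.ofReal_le_ofReal (hu1 k ▸ dyadic_term_le ε k)
    _ = ENNReal.ofReal (2 / (Real.exp 1 * Real.log 2)) := by
        rw [← ENNReal.ofReal_tsum_of_nonneg (fun k => by positivity) hsum.summable,
          hsum.tsum_eq, hC, Real.exp_neg]
        ring_nf
end

section
/- Let $s\in(0,1)$, $p\in[1,\infty)$ and let $N_0^{s,p}(\mathbb{R}^N)$ be the set of $f\in L^p(\mathbb{R}^N)$ with $\lim_{|h|\to 0}\|f(\cdot+h)-f\|_{L^p}/|h|^s=0$. Then $N_0^{s,p}(\mathbb{R}^N)$ coincides with the closure of $C_c^\infty(\mathbb{R}^N)$ in the norm $\|f\|_{N^{s,p}}:=\|f\|_{L^p}+\limsup_{|h|\to 0}\|f(\cdot+h)-f\|_{L^p}/|h|^s$. -/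
/-!
A Lipschitz function `φ` with compact support satisfies
`‖φ(· + h) - φ‖_{L^p} ≤ L |h| · |K₁|^{1/p}` for `|h| ≤ 1`, where `K₁` is the closed
`1`-thickening of its support; since `s < 1`, its difference quotients therefore tend to `0`.
By the triangle inequality, subtracting such a function (in particular any `C_c^∞` function)
leaves `limsup_{h → 0} ‖f(· + h) - f‖_{L^p} / |h|^s` unchanged, so the theorem reduces to the
density of `C_c^∞` in `L^p` for `p < ∞`.
-/

open MeasureTheory Filter Topology ENNReal Metric
open scoped NNReal

section Nikolskii

variable {G F : Type*} [NormedAddCommGroup G] [MeasurableSpace G] [NormedAddCommGroup F]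
  {s : ℝ} {p : ℝ≥0∞} {μ : Measure G}

noncomputable def nikolskiiQuotient (s : ℝ) (p : ℝ≥0∞) (μ : Measure G) (f : G → F) (h : G) :
    ℝ≥0∞ :=
  eLpNorm (fun x => f (x + h) - f x) p μ / ENNReal.ofReal (‖h‖ ^ s)

noncomputable def nikolskiiSeminorm (s : ℝ) (p : ℝ≥0∞) (μ : Measure G) (f : G → F) : ℝ≥0∞ :=
  limsup (nikolskiiQuotient s p μ f) (𝓝[≠] 0)

theorem nikolskiiQuotient_neg (f : G → F) :
    nikolskiiQuotient s p μ (-f) = nikolskiiQuotient s p μ f := by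
  ext h
  have : (fun x => (-f) (x + h) - (-f) x) = -fun x => f (x + h) - f x := by
    ext x; simp only [Pi.neg_apply]; abel
  rw [nikolskiiQuotient, nikolskiiQuotient, this, eLpNorm_neg]

theorem nikolskiiQuotient_add_le [MeasurableAdd G] [μ.IsAddRightInvariant] (hp : 1 ≤ p)
    {f g : G → F} (hf : AEStronglyMeasurable f μ) (hg : AEStronglyMeasurable g μ) (h : G) :
    nikolskiiQuotient s p μ (f + g) h ≤
      nikolskiiQuotient s p μ f h + nikolskiiQuotient s p μ g h := by
  have translate_sub {u : G → F} (hu : AEStronglyMeasurable u μ) :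
      AEStronglyMeasurable (fun x => u (x + h) - u x) μ :=
    (hu.comp_measurePreserving (measurePreserving_add_right μ h)).sub hu
  rw [nikolskiiQuotient, nikolskiiQuotient, nikolskiiQuotient, ← ENNReal.add_div]
  gcongr
  calc eLpNorm (fun x => (f + g) (x + h) - (f + g) x) p μ
      = eLpNorm ((fun x => f (x + h) - f x) + fun x => g (x + h) - g x) p μ := by
        congr 1; ext x; simp only [Pi.add_apply]; abel
    _ ≤ _ := eLpNorm_add_le (translate_sub hf) (translate_sub hg) hp

theorem nikolskiiSeminorm_add_eq_of_tendsto_zero [MeasurableAdd G] [μ.IsAddRightInvariant]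
    (hp : 1 ≤ p) {f g : G → F} (hf : AEStronglyMeasurable f μ) (hg : AEStronglyMeasurable g μ)
    (hg₀ : Tendsto (nikolskiiQuotient s p μ g) (𝓝[≠] 0) (𝓝 0)) :
    nikolskiiSeminorm s p μ (f + g) = nikolskiiSeminorm s p μ f := by
  have le_of_add {u v : G → F} (hu : AEStronglyMeasurable u μ) (hv : AEStronglyMeasurable v μ)
      (hv₀ : Tendsto (nikolskiiQuotient s p μ v) (𝓝[≠] 0) (𝓝 0)) :
      nikolskiiSeminorm s p μ (u + v) ≤ nikolskiiSeminorm s p μ u :=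
    (limsup_le_limsup (.of_forall (nikolskiiQuotient_add_le hp hu hv))).trans_eq
      (ENNReal.limsup_add_of_right_tendsto_zero hv₀ _)
  refine le_antisymm (le_of_add hf hg hg₀) ?_
  calc nikolskiiSeminorm s p μ f = nikolskiiSeminorm s p μ (f + g + -g) := by
        rw [add_neg_cancel_right]
    _ ≤ nikolskiiSeminorm s p μ (f + g) :=
        le_of_add (hf.add hg) hg.neg (by rwa [nikolskiiQuotient_neg])

theorem LipschitzWith.eLpNorm_translate_sub_le [OpensMeasurableSpace G] (hp : p ≠ ⊤) {L : ℝ≥0}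
    {φ : G → F} (hφ : LipschitzWith L φ) {h : G} (hh : ‖h‖ ≤ 1) :
    eLpNorm (fun x => φ (x + h) - φ x) p μ ≤
      ENNReal.ofReal (L * ‖h‖) * μ (cthickening 1 (tsupport φ)) ^ (1 / p.toReal) := by
  refine eLpNorm_sub_le_of_dist_bdd (f := fun x => φ (x + h)) (g := φ) μ hp
    isClosed_cthickening.measurableSet (by positivity)
    (fun x => by simpa using hφ.dist_le_mul (x + h) x) (fun x hx => ?_)
    ((subset_tsupport φ).trans (self_subset_cthickening _))
  exact mem_cthickening_of_dist_le x (x + h) 1 _ (subset_tsupport φ hx) (by simpa using hh)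

theorem LipschitzWith.tendsto_nikolskiiQuotient_zero [ProperSpace G] [OpensMeasurableSpace G]
    [IsFiniteMeasureOnCompacts μ] (hs : s < 1) (hp : p ≠ ⊤) {L : ℝ≥0} {φ : G → F}
    (hφ : LipschitzWith L φ) (hc : HasCompactSupport φ) :
    Tendsto (nikolskiiQuotient s p μ φ) (𝓝[≠] 0) (𝓝 0) := by
  set C := μ (cthickening 1 (tsupport φ)) ^ (1 / p.toReal)
  have hC : C ≠ ⊤ := ENNReal.rpow_ne_top_of_nonneg (by positivity)
    hc.isCompact.cthickening.measure_lt_top.ne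
  have hs' : 0 < 1 - s := sub_pos.2 hs
  have bound_tendsto :
      Tendsto (fun h : G => ENNReal.ofReal (L * ‖h‖ ^ (1 - s)) * C) (𝓝[≠] 0) (𝓝 0) := by
    have : Tendsto (fun h : G => (L : ℝ) * ‖h‖ ^ (1 - s)) (𝓝 0) (𝓝 0) := by
      simpa [Real.zero_rpow hs'.ne'] using
        ((continuous_norm.rpow_const fun _ => Or.inr hs'.le).const_mul (L : ℝ)).tendsto (0 : G)
    simpa using (ENNReal.Tendsto.mul_const (ENNReal.tendsto_ofReal this) (.inr hC)).mono_left
      nhdsWithin_le_nhds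
  refine tendsto_of_tendsto_of_tendsto_of_le_of_le' tendsto_const_nhds bound_tendsto
    (.of_forall fun _ => zero_le) ?_
  filter_upwards [self_mem_nhdsWithin, nhdsWithin_le_nhds (closedBall_mem_nhds (0 : G) one_pos)]
    with h (hh₀ : h ≠ 0) hh₁
  have hpos : 0 < ‖h‖ := norm_pos_iff.2 hh₀
  calc nikolskiiQuotient s p μ φ h ≤ ENNReal.ofReal (L * ‖h‖) * C / ENNReal.ofReal (‖h‖ ^ s) :=
        ENNReal.div_le_div_right (hφ.eLpNorm_translate_sub_le hp (by simpa using hh₁)) _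
    _ = ENNReal.ofReal (L * ‖h‖ / ‖h‖ ^ s) * C := by
        rw [ENNReal.ofReal_div_of_pos (by positivity), ENNReal.mul_div_right_comm]
    _ = ENNReal.ofReal (L * ‖h‖ ^ (1 - s)) * C := by
        rw [Real.rpow_sub hpos, Real.rpow_one, mul_div_assoc]

end Nikolskii

theorem N0_eq_closure_smooth_general (N : ℕ) (s : ℝ) (hs1 : s < 1)
    (p : ℝ≥0∞) (hp : 1 ≤ p) (hp' : p ≠ ⊤)
    (f : EuclideanSpace ℝ (Fin N) → ℝ) (hf : MemLp f p volume) :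
    (Filter.limsup
        (fun h : EuclideanSpace ℝ (Fin N) =>
          eLpNorm (fun x => f (x + h) - f x) p volume / ENNReal.ofReal (‖h‖ ^ s))
        (𝓝[≠] (0 : EuclideanSpace ℝ (Fin N))) = 0) ↔
      ∃ fn : ℕ → EuclideanSpace ℝ (Fin N) → ℝ,
        (∀ n, ContDiff ℝ (⊤ : ℕ∞) (fn n) ∧ HasCompactSupport (fn n)) ∧
        Filter.Tendsto
          (fun n =>
            eLpNorm (fun x => f x - fn n x) p volume +
              Filter.limsup
                (fun h : EuclideanSpace ℝ (Fin N) =>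
                  eLpNorm (fun x => (f (x + h) - fn n (x + h)) - (f x - fn n x)) p volume /
                    ENNReal.ofReal (‖h‖ ^ s))
                (𝓝[≠] (0 : EuclideanSpace ℝ (Fin N))))
          atTop (𝓝 0) := by
  have seminorm_sub_smooth (φ : EuclideanSpace ℝ (Fin N) → ℝ) (hφ : ContDiff ℝ (⊤ : ℕ∞) φ)
      (hc : HasCompactSupport φ) :
      nikolskiiSeminorm s p volume (f - φ) = nikolskiiSeminorm s p volume f := by
    obtain ⟨L, hL⟩ := hφ.lipschitzWith_of_hasCompactSupport hc (by simp)
    rw [sub_eq_add_neg]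
    refine nikolskiiSeminorm_add_eq_of_tendsto_zero hp hf.aestronglyMeasurable
      hφ.continuous.aestronglyMeasurable.neg ?_
    rw [nikolskiiQuotient_neg]
    exact hL.tendsto_nikolskiiQuotient_zero hs1 hp' hc
  change nikolskiiSeminorm s p volume f = 0 ↔ ∃ fn : ℕ → EuclideanSpace ℝ (Fin N) → ℝ,
    (∀ n, ContDiff ℝ (⊤ : ℕ∞) (fn n) ∧ HasCompactSupport (fn n)) ∧
    Tendsto (fun n => eLpNorm (f - fn n) p volume + nikolskiiSeminorm s p volume (f - fn n))
      atTop (𝓝 0)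
  constructor
  · intro hf₀
    choose fn hc hφ hclose using fun n : ℕ =>
      hf.exist_eLpNorm_sub_le hp' hp (Nat.one_div_pos_of_nat (n := n))
    refine ⟨fn, fun n => ⟨hφ n, hc n⟩, ?_⟩
    simp_rw [seminorm_sub_smooth _ (hφ _) (hc _), hf₀, add_zero]
    refine tendsto_of_tendsto_of_tendsto_of_le_of_le tendsto_const_nhds ?_
      (fun _ => zero_le) hclose
    simpa using ENNReal.tendsto_ofReal tendsto_one_div_add_atTop_nhds_zero_nat
  · rintro ⟨fn, hfn, htends⟩
    simp_rw [seminorm_sub_smooth _ (hfn _).1 (hfn _).2] at htends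
    exact le_antisymm (ge_of_tendsto' htends fun _ => le_add_self) zero_le

/-- For `s ∈ (0,1)` and `p ∈ [1,∞)`, the space `N_0^{s,p}` of `f ∈ L^p` with
`limsup_{|h|→0} ‖f(·+h)-f‖_{L^p}/|h|^s = 0` coincides with the closure of `C_c^∞(ℝ^N)` in
the norm `‖f‖_{L^p} + limsup_{|h|→0} ‖f(·+h)-f‖_{L^p}/|h|^s`. -/
theorem N0_eq_closure_smooth (N : ℕ) (s : ℝ) (hs0 : 0 < s) (hs1 : s < 1)
    (p : ℝ≥0∞) (hp : 1 ≤ p) (hp' : p ≠ ⊤)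
    (f : EuclideanSpace ℝ (Fin N) → ℝ) (hf : MemLp f p volume) :
    (Filter.limsup
        (fun h : EuclideanSpace ℝ (Fin N) =>
          eLpNorm (fun x => f (x + h) - f x) p volume / ENNReal.ofReal (‖h‖ ^ s))
        (𝓝[≠] (0 : EuclideanSpace ℝ (Fin N))) = 0) ↔
      ∃ fn : ℕ → EuclideanSpace ℝ (Fin N) → ℝ,
        (∀ n, ContDiff ℝ (⊤ : ℕ∞) (fn n) ∧ HasCompactSupport (fn n)) ∧
        Filter.Tendsto
          (fun n =>
            eLpNorm (fun x => f x - fn n x) p volume +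
              Filter.limsup
                (fun h : EuclideanSpace ℝ (Fin N) =>
                  eLpNorm (fun x => (f (x + h) - fn n (x + h)) - (f x - fn n x)) p volume /
                    ENNReal.ofReal (‖h‖ ^ s))
                (𝓝[≠] (0 : EuclideanSpace ℝ (Fin N))))
          atTop (𝓝 0) :=
  N0_eq_closure_smooth_general N s hs1 p hp hp' f hf
end

section
/- Let $s\in(0,1)$, $p\in[1,\infty)$ and $f\in L^p(\mathbb{R}^N)$. Then there exists a sequence $(f_n)\subset C_c^\infty(\mathbb{R}^N)$ with $\|f-f_n\|_{L^p}+\limsup_{|h|\to 0}\|\Delta_h^1(f-f_n)\|_{L^p}/|h|^s\to 0$ if and only if there exists a sequence $(g_n)\subset C_c^\infty(\mathbb{R}^N)$ with $\|f-g_n\|_{L^p}+\sup_{h\neq 0}\|\Delta_h^1(f-g_n)\|_{L^p}/|h|^s\to 0$. -/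
/-!
Passing from `B^s_{p,∞}` to `N^{s,p}` is trivial, as a `limsup` is bounded by a supremum.
Conversely, since `s < 1` the difference quotients of a function in `C_c^∞` tend to zero
(`‖Δ_h φ‖_p = O(|h|)`), so a limit `f` of such functions in `N^{s,p}` satisfies
`‖Δ_h f‖_p = o(|h|^s)` as `h → 0`. Given `ε`, choose `δ ≤ 1` with `‖Δ_h f‖_p ≤ ε |h|^s` for
`|h| < δ`. Mollifying at scale `δ` gives a smooth `g₀` with `‖f - g₀‖_p ≤ ε δ^s` and
`‖Δ_h g₀‖_p ≤ ‖Δ_h f‖_p` (Minkowski's integral inequality), and cutting `g₀` off at a large radius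
`R` costs little in `L^p` and `O(|h| / R)` in the differences. For `|h| < δ` the Leibniz rule for
differences bounds `‖Δ_h (f - g)‖_p` by `3 ε |h|^s`; for `|h| ≥ δ` the trivial bound
`2 ‖f - g‖_p ≤ 4 ε δ^s ≤ 4 ε |h|^s` suffices.
-/

open MeasureTheory Filter Topology ENNReal Metric Function

section Minkowski

variable {α β F : Type*} [MeasurableSpace α] [MeasurableSpace β] [NormedAddCommGroup F]
  {μ : Measure α} {ν : Measure β} {p : ℝ≥0∞}

theorem eLpNorm_le_iff_lintegral_rpow_le (hp0 : p ≠ 0) (hp' : p ≠ ∞) {u : α → F} {C : ℝ≥0∞} :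
    eLpNorm u p μ ≤ C ↔ ∫⁻ x, ‖u x‖ₑ ^ p.toReal ∂μ ≤ C ^ p.toReal := by
  rw [eLpNorm_eq_lintegral_rpow_enorm_toReal hp0 hp', one_div,
    ENNReal.rpow_inv_le_iff (ENNReal.toReal_pos hp0 hp')]

/-- Minkowski's integral inequality, for an average against a probability measure. -/
theorem eLpNorm_integral_le_of_ae_eLpNorm_le [NormedSpace ℝ F] [SFinite μ]
    [IsProbabilityMeasure ν] (hp : 1 ≤ p) (hp' : p ≠ ∞) {V : α → β → F}
    (hV : AEStronglyMeasurable (uncurry V) (μ.prod ν)) {C : ℝ≥0∞}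
    (hC : ∀ᵐ y ∂ν, eLpNorm (fun x => V x y) p μ ≤ C) :
    eLpNorm (fun x => ∫ y, V x y ∂ν) p μ ≤ C := by
  have hp0 : p ≠ 0 := (zero_lt_one.trans_le hp).ne'
  set r := p.toReal
  have hr : 0 < r := ENNReal.toReal_pos hp0 hp'
  have hjensen : ∀ᵐ x ∂μ, ‖∫ y, V x y ∂ν‖ₑ ^ r ≤ ∫⁻ y, ‖V x y‖ₑ ^ r ∂ν := by
    filter_upwards [hV.prodMk_left] with x hx
    calc ‖∫ y, V x y ∂ν‖ₑ ^ r ≤ eLpNorm (V x) 1 ν ^ r := by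
          gcongr
          rw [eLpNorm_one_eq_lintegral_enorm]
          exact enorm_integral_le_lintegral_enorm _
      _ ≤ eLpNorm (V x) p ν ^ r := by gcongr; exact eLpNorm_le_eLpNorm_of_exponent_le hp hx
      _ = ∫⁻ y, ‖V x y‖ₑ ^ r ∂ν := by
          rw [eLpNorm_eq_eLpNorm' hp0 hp', lintegral_rpow_enorm_eq_rpow_eLpNorm' hr]
  rw [eLpNorm_le_iff_lintegral_rpow_le hp0 hp']
  calc ∫⁻ x, ‖∫ y, V x y ∂ν‖ₑ ^ r ∂μ ≤ ∫⁻ x, ∫⁻ y, ‖V x y‖ₑ ^ r ∂ν ∂μ :=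
        lintegral_mono_ae hjensen
    _ = ∫⁻ y, ∫⁻ x, ‖V x y‖ₑ ^ r ∂μ ∂ν :=
        lintegral_lintegral_swap (hV.enorm.pow_const r)
    _ ≤ ∫⁻ _, C ^ r ∂ν := by
        refine lintegral_mono_ae ?_
        filter_upwards [hC] with y hy
        exact (eLpNorm_le_iff_lintegral_rpow_le hp0 hp').1 hy
    _ = C ^ r := by simp

end Minkowski

namespace MeasureTheory

variable {G : Type*} [AddCommGroup G] [MeasurableSpace G] [MeasurableAdd₂ G]
  {μ : Measure G} [μ.IsAddLeftInvariant] {p : ℝ≥0∞} {u : G → ℝ}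

theorem eLpNorm_comp_add_right (hu : AEStronglyMeasurable u μ) (h : G) :
    eLpNorm (fun x => u (x + h)) p μ = eLpNorm u p μ :=
  eLpNorm_comp_measurePreserving hu (measurePreserving_add_right μ h)

theorem AEStronglyMeasurable.comp_add_right (hu : AEStronglyMeasurable u μ) (h : G) :
    AEStronglyMeasurable (fun x => u (x + h)) μ :=
  hu.comp_measurePreserving (measurePreserving_add_right μ h)

theorem AEStronglyMeasurable.comp_sub_prod [MeasurableNeg G] [SFinite μ]
    (hu : AEStronglyMeasurable u μ) :
    AEStronglyMeasurable (fun z : G × G => u (z.1 - z.2)) (μ.prod μ) :=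
  hu.comp_quasiMeasurePreserving (quasiMeasurePreserving_sub μ μ)

theorem eLpNorm_sub_comp_add_le_two_mul (hp : 1 ≤ p) (hu : AEStronglyMeasurable u μ) (h : G) :
    eLpNorm (fun x => u (x + h) - u x) p μ ≤ 2 * eLpNorm u p μ := by
  calc eLpNorm (fun x => u (x + h) - u x) p μ
      ≤ eLpNorm (fun x => u (x + h)) p μ + eLpNorm u p μ :=
        eLpNorm_sub_le (hu.comp_add_right h) hu hp
    _ = 2 * eLpNorm u p μ := by rw [eLpNorm_comp_add_right hu, two_mul]

/-- Leibniz rule for differences: `Δ_h (f - χ g) = Δ_h f - χ(· + h) Δ_h g - g Δ_h χ`. -/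
theorem eLpNorm_sub_comp_add_sub_mul_le (hp : 1 ≤ p) {f g χ : G → ℝ}
    (hf : AEStronglyMeasurable f μ) (hg : AEStronglyMeasurable g μ)
    (hχ : AEStronglyMeasurable χ μ) (hχ1 : ∀ x, |χ x| ≤ 1) (h : G) :
    eLpNorm (fun x => (f (x + h) - χ (x + h) * g (x + h)) - (f x - χ x * g x)) p μ ≤
      eLpNorm (fun x => f (x + h) - f x) p μ + eLpNorm (fun x => g (x + h) - g x) p μ +
        eLpNorm (fun x => g x * (χ (x + h) - χ x)) p μ := by
  have hΔf : AEStronglyMeasurable (fun x => f (x + h) - f x) μ := (hf.comp_add_right h).sub hf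
  have hχΔg : AEStronglyMeasurable (fun x => χ (x + h) * (g (x + h) - g x)) μ :=
    (hχ.comp_add_right h).mul ((hg.comp_add_right h).sub hg)
  have hgΔχ : AEStronglyMeasurable (fun x => g x * (χ (x + h) - χ x)) μ :=
    hg.mul ((hχ.comp_add_right h).sub hχ)
  have hleib : (fun x => (f (x + h) - χ (x + h) * g (x + h)) - (f x - χ x * g x)) =
      fun x => ((f (x + h) - f x) - χ (x + h) * (g (x + h) - g x)) - g x * (χ (x + h) - χ x) :=
    funext fun x => by ring
  have hχΔg_le : eLpNorm (fun x => χ (x + h) * (g (x + h) - g x)) p μ ≤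
      eLpNorm (fun x => g (x + h) - g x) p μ := eLpNorm_mono fun x => by
    rw [norm_mul]
    exact mul_le_of_le_one_left (norm_nonneg _) (hχ1 (x + h))
  rw [hleib]
  calc _ ≤ eLpNorm (fun x => (f (x + h) - f x) - χ (x + h) * (g (x + h) - g x)) p μ +
        eLpNorm (fun x => g x * (χ (x + h) - χ x)) p μ :=
        eLpNorm_sub_le (hΔf.sub hχΔg) hgΔχ hp
    _ ≤ eLpNorm (fun x => f (x + h) - f x) p μ +
        eLpNorm (fun x => χ (x + h) * (g (x + h) - g x)) p μ +
        eLpNorm (fun x => g x * (χ (x + h) - χ x)) p μ := by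
      gcongr
      exact eLpNorm_sub_le hΔf hχΔg hp
    _ ≤ _ := by gcongr

end MeasureTheory

section DiffQuotient

variable {E : Type*} [NormedAddCommGroup E] [MeasurableSpace E] {μ : Measure E} {p : ℝ≥0∞}
  {s : ℝ}

noncomputable def diffQuotient (p : ℝ≥0∞) (s : ℝ) (μ : Measure E) (u : E → ℝ) (h : E) :
    ℝ≥0∞ :=
  eLpNorm (fun x => u (x + h) - u x) p μ / ENNReal.ofReal (‖h‖ ^ s)

theorem diffQuotient_add_le [MeasurableAdd₂ E] [μ.IsAddLeftInvariant] (hp : 1 ≤ p)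
    {u v : E → ℝ} (hu : AEStronglyMeasurable u μ) (hv : AEStronglyMeasurable v μ) (h : E) :
    diffQuotient p s μ (u + v) h ≤ diffQuotient p s μ u h + diffQuotient p s μ v h := by
  rw [diffQuotient, diffQuotient, diffQuotient, ← ENNReal.add_div]
  gcongr
  simp only [Pi.add_apply, add_sub_add_comm]
  exact eLpNorm_add_le ((hu.comp_add_right h).sub hu) ((hv.comp_add_right h).sub hv) hp

theorem LipschitzWith.exists_eLpNorm_sub_comp_add_le [ProperSpace E]
    [IsFiniteMeasureOnCompacts μ] {K : NNReal} {φ : E → ℝ}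
    (hφ : LipschitzWith K φ) (hφc : HasCompactSupport φ) (p : ℝ≥0∞) :
    ∃ C : ℝ≥0∞, C ≠ ∞ ∧ ∀ h : E, ‖h‖ ≤ 1 →
      eLpNorm (fun x => φ (x + h) - φ x) p μ ≤ C * ENNReal.ofReal ‖h‖ := by
  set S := cthickening 1 (tsupport φ)
  have hS : μ S ≠ ∞ := hφc.cthickening.measure_lt_top.ne
  refine ⟨K * μ S ^ (1 / p.toReal), by finiteness, fun h hh => ?_⟩
  have hbound : ∀ x, ‖φ (x + h) - φ x‖ ≤ ‖S.indicator (fun _ => (K : ℝ) * ‖h‖) x‖ := by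
    intro x
    by_cases hx : x ∈ S
    · rw [Set.indicator_of_mem hx, Real.norm_of_nonneg (by positivity : (0 : ℝ) ≤ K * ‖h‖),
        ← dist_eq_norm]
      simpa using hφ.dist_le_mul (x + h) x
    · have hx0 : φ x = 0 := image_eq_zero_of_notMem_tsupport
        fun hmem => hx (self_subset_cthickening _ hmem)
      have hxh0 : φ (x + h) = 0 := image_eq_zero_of_notMem_tsupport fun hmem =>
        hx (mem_cthickening_of_dist_le x (x + h) 1 _ hmem (by simpa [dist_eq_norm] using hh))
      simp [hx, hx0, hxh0]
  calc eLpNorm (fun x => φ (x + h) - φ x) p μ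
      ≤ eLpNorm (S.indicator fun _ => (K : ℝ) * ‖h‖) p μ := eLpNorm_mono hbound
    _ ≤ ‖(K : ℝ) * ‖h‖‖ₑ * μ S ^ (1 / p.toReal) := eLpNorm_indicator_const_le _ _
    _ = K * μ S ^ (1 / p.toReal) * ENNReal.ofReal ‖h‖ := by
        rw [Real.enorm_eq_ofReal (by positivity), ENNReal.ofReal_mul K.coe_nonneg,
          ENNReal.ofReal_coe_nnreal]
        ring

theorem tendsto_diffQuotient_of_contDiff [NormedSpace ℝ E] [ProperSpace E]
    [IsFiniteMeasureOnCompacts μ] (hs : s < 1) {φ : E → ℝ}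
    (hφ : ContDiff ℝ (⊤ : ℕ∞) φ) (hφc : HasCompactSupport φ) :
    Tendsto (diffQuotient p s μ φ) (𝓝[≠] 0) (𝓝 0) := by
  obtain ⟨K, hK⟩ := hφ.lipschitzWith_of_hasCompactSupport hφc (by simp)
  obtain ⟨C, hC, hCφ⟩ := hK.exists_eLpNorm_sub_comp_add_le (μ := μ) hφc p
  have hnorm : Tendsto (fun h : E => ‖h‖) (𝓝[≠] 0) (𝓝 0) :=
    tendsto_norm_zero.mono_left nhdsWithin_le_nhds
  have hbound : Tendsto (fun h : E => C * ENNReal.ofReal (‖h‖ ^ (1 - s))) (𝓝[≠] 0) (𝓝 0) := by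
    have hpow := ((Real.continuousAt_rpow_const 0 (1 - s) (by right; linarith)).tendsto.comp
      hnorm)
    rw [Real.zero_rpow (by linarith)] at hpow
    simpa using ENNReal.Tendsto.const_mul (ENNReal.tendsto_ofReal hpow) (Or.inr hC)
  refine tendsto_of_tendsto_of_tendsto_of_le_of_le' tendsto_const_nhds hbound
    (Eventually.of_forall fun _ => zero_le) ?_
  filter_upwards [hnorm.eventually (eventually_le_nhds one_pos), self_mem_nhdsWithin]
    with h hh1 hh0
  have hpos : 0 < ‖h‖ := norm_pos_iff.mpr hh0
  calc diffQuotient p s μ φ h ≤ C * ENNReal.ofReal ‖h‖ / ENNReal.ofReal (‖h‖ ^ s) :=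
        ENNReal.div_le_div_right (hCφ h hh1) _
    _ = C * ENNReal.ofReal (‖h‖ ^ (1 - s)) := by
        rw [mul_div_assoc, ← ENNReal.ofReal_div_of_pos (Real.rpow_pos_of_pos hpos s),
          Real.rpow_sub hpos, Real.rpow_one]

theorem diffQuotient_le_iff {u : E → ℝ} {h : E} (hh : h ≠ 0) {C : ℝ≥0∞} :
    diffQuotient p s μ u h ≤ C ↔
      eLpNorm (fun x => u (x + h) - u x) p μ ≤ C * ENNReal.ofReal (‖h‖ ^ s) :=
  ENNReal.div_le_iff (by simpa using Real.rpow_pos_of_pos (norm_pos_iff.2 hh) s) ofReal_ne_top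

theorem exists_forall_ball_eLpNorm_le_of_tendsto_diffQuotient {f : E → ℝ}
    (hquot : Tendsto (diffQuotient p s μ f) (𝓝[≠] 0) (𝓝 0)) {ε : ℝ≥0∞} (hε : 0 < ε) :
    ∃ δ : ℝ, 0 < δ ∧ δ ≤ 1 ∧ ∀ y ∈ ball (0 : E) δ,
      eLpNorm (fun x => f (x + y) - f x) p μ ≤ ε * ENNReal.ofReal (‖y‖ ^ s) := by
  obtain ⟨δ, hδ, hball⟩ := Metric.eventually_nhds_iff_ball.1
    (eventually_nhdsWithin_iff.1 (hquot.eventually (eventually_le_nhds hε)))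
  refine ⟨min δ 1, lt_min hδ one_pos, min_le_right _ _, fun y hy => ?_⟩
  rcases eq_or_ne y 0 with rfl | hy0
  · simp
  · exact (diffQuotient_le_iff hy0).1 (hball y (ball_subset_ball (min_le_left _ _) hy) hy0)

theorem iSup_diffQuotient_le [MeasurableAdd₂ E] [μ.IsAddLeftInvariant] (hp : 1 ≤ p)
    (hs : 0 ≤ s) {u : E → ℝ} (hu : AEStronglyMeasurable u μ) {δ : ℝ} (hδ : 0 ≤ δ) {C : ℝ≥0∞}
    (hsmall : ∀ h ∈ ball (0 : E) δ, h ≠ 0 →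
      eLpNorm (fun x => u (x + h) - u x) p μ ≤ C * ENNReal.ofReal (‖h‖ ^ s))
    (hlarge : 2 * eLpNorm u p μ ≤ C * ENNReal.ofReal (δ ^ s)) :
    ⨆ h : {h : E // h ≠ 0}, diffQuotient p s μ u h ≤ C := by
  refine iSup_le fun ⟨h, hh⟩ => (diffQuotient_le_iff hh).2 ?_
  rcases lt_or_ge ‖h‖ δ with hδh | hδh
  · exact hsmall h (mem_ball_zero_iff.2 hδh) hh
  · calc _ ≤ 2 * eLpNorm u p μ := eLpNorm_sub_comp_add_le_two_mul hp hu h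
      _ ≤ C * ENNReal.ofReal (δ ^ s) := hlarge
      _ ≤ C * ENNReal.ofReal (‖h‖ ^ s) := by gcongr

end DiffQuotient

section Approximation

open ContinuousLinearMap Convolution

variable {E : Type*} [NormedAddCommGroup E] [NormedSpace ℝ E] [FiniteDimensional ℝ E]
  [MeasurableSpace E] [BorelSpace E] {μ : Measure E} [μ.IsAddHaarMeasure] {p : ℝ≥0∞} {s : ℝ}

theorem ContDiffBump.isProbabilityMeasure_withDensity_normed (b : ContDiffBump (0 : E)) :
    IsProbabilityMeasure (μ.withDensity fun y => ENNReal.ofReal (b.normed μ y)) := by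
  constructor
  rw [withDensity_apply _ MeasurableSet.univ, Measure.restrict_univ,
    ← ofReal_integral_eq_lintegral_ofReal b.integrable_normed
      (ae_of_all _ fun _ => b.nonneg_normed _),
    b.integral_normed, ENNReal.ofReal_one]

theorem ContDiffBump.eLpNorm_integral_normed_smul_le (b : ContDiffBump (0 : E)) (hp : 1 ≤ p)
    (hp' : p ≠ ∞) {V : E → E → ℝ} (hV : AEStronglyMeasurable (uncurry V) (μ.prod μ)) {C : ℝ≥0∞}
    (hC : ∀ y ∈ ball (0 : E) b.rOut, eLpNorm (fun x => V x y) p μ ≤ C) :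
    eLpNorm (fun x => ∫ y, b.normed μ y • V x y ∂μ) p μ ≤ C := by
  set w : E → ℝ≥0∞ := fun y => ENNReal.ofReal (b.normed μ y)
  have hw : Measurable w := ENNReal.measurable_ofReal.comp b.continuous_normed.measurable
  have := b.isProbabilityMeasure_withDensity_normed (μ := μ)
  have hint : ∀ x, ∫ y, V x y ∂μ.withDensity w = ∫ y, b.normed μ y • V x y ∂μ := fun x => by
    rw [integral_withDensity_eq_integral_toReal_smul hw (ae_of_all _ fun _ => ofReal_lt_top)]
    simp_rw [w, ENNReal.toReal_ofReal (b.nonneg_normed _)]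
  simp_rw [← hint]
  refine eLpNorm_integral_le_of_ae_eLpNorm_le hp hp'
    (hV.mono_ac (.prod .rfl (withDensity_absolutelyContinuous _ _))) ?_
  rw [ae_withDensity_iff hw]
  refine ae_of_all _ fun y hy => hC y ?_
  rw [← b.support_normed_eq (μ := μ)]
  exact fun h0 => hy (by simp [w, h0])

theorem ContDiffBump.integrable_normed_smul_comp_sub (b : ContDiffBump (0 : E)) {u : E → ℝ}
    (hu : LocallyIntegrable u μ) (x : E) : Integrable (fun y => b.normed μ y • u (x - y)) μ :=
  b.hasCompactSupport_normed.convolutionExists_left (lsmul ℝ ℝ) b.continuous_normed hu x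

theorem ContDiffBump.eLpNorm_normed_convolution_le (b : ContDiffBump (0 : E)) (hp : 1 ≤ p)
    (hp' : p ≠ ∞) {u : E → ℝ} (hu : AEStronglyMeasurable u μ) :
    eLpNorm (b.normed μ ⋆[lsmul ℝ ℝ, μ] u) p μ ≤ eLpNorm u p μ := by
  refine b.eLpNorm_integral_normed_smul_le hp hp' (V := fun x y => u (x - y)) hu.comp_sub_prod
    fun y _ => ?_
  simp_rw [sub_eq_add_neg]
  exact (eLpNorm_comp_add_right hu (-y)).le

theorem ContDiffBump.normed_convolution_comp_add_sub (b : ContDiffBump (0 : E)) {u : E → ℝ}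
    (hu : LocallyIntegrable u μ) (h x : E) :
    (b.normed μ ⋆[lsmul ℝ ℝ, μ] u) (x + h) - (b.normed μ ⋆[lsmul ℝ ℝ, μ] u) x =
      (b.normed μ ⋆[lsmul ℝ ℝ, μ] fun z => u (z + h) - u z) x := by
  have hxh : ∀ y, x + h - y = x - y + h := fun y => by abel
  simp only [convolution_lsmul, smul_sub]
  rw [integral_sub _ (b.integrable_normed_smul_comp_sub hu x)]
  · simp_rw [hxh]
  · simpa only [hxh] using b.integrable_normed_smul_comp_sub hu (x + h)

theorem ContDiffBump.eLpNorm_normed_convolution_sub_le (b : ContDiffBump (0 : E)) (hp : 1 ≤ p)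
    (hp' : p ≠ ∞) {u : E → ℝ} (hu : MemLp u p μ) {C : ℝ≥0∞}
    (hC : ∀ y ∈ ball (0 : E) b.rOut, eLpNorm (fun x => u (x + y) - u x) p μ ≤ C) :
    eLpNorm (b.normed μ ⋆[lsmul ℝ ℝ, μ] u - u) p μ ≤ C := by
  have hconv : b.normed μ ⋆[lsmul ℝ ℝ, μ] u - u =
      fun x => ∫ y, b.normed μ y • (u (x - y) - u x) ∂μ := funext fun x => by
    simp only [Pi.sub_apply, convolution_lsmul, smul_sub]
    rw [integral_sub (b.integrable_normed_smul_comp_sub (hu.locallyIntegrable hp) x)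
      (b.integrable_normed.smul_const _), integral_smul_const, b.integral_normed, one_smul]
  rw [hconv]
  refine b.eLpNorm_integral_normed_smul_le hp hp' (V := fun x y => u (x - y) - u x)
    (hu.1.comp_sub_prod.sub (hu.1.comp_fst (ν := μ))) fun y hy => ?_
  simpa only [sub_eq_add_neg] using hC (-y) (by simpa using hy)

theorem MeasureTheory.MemLp.exists_mollification (hp : 1 ≤ p) (hp' : p ≠ ∞) {f : E → ℝ}
    (hf : MemLp f p μ) {δ : ℝ} (hδ : 0 < δ) {C : ℝ≥0∞}
    (hC : ∀ y ∈ ball (0 : E) δ, eLpNorm (fun x => f (x + y) - f x) p μ ≤ C) :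
    ∃ g : E → ℝ, ContDiff ℝ (⊤ : ℕ∞) g ∧ MemLp g p μ ∧ eLpNorm (f - g) p μ ≤ C ∧
      ∀ h, eLpNorm (fun x => g (x + h) - g x) p μ ≤ eLpNorm (fun x => f (x + h) - f x) p μ := by
  let b : ContDiffBump (0 : E) := ⟨δ / 2, δ, half_pos hδ, half_lt_self hδ⟩
  have hg : ContDiff ℝ (⊤ : ℕ∞) (b.normed μ ⋆[lsmul ℝ ℝ, μ] f) :=
    b.hasCompactSupport_normed.contDiff_convolution_left _ b.contDiff_normed
      (hf.locallyIntegrable hp)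
  refine ⟨b.normed μ ⋆[lsmul ℝ ℝ, μ] f, hg,
    ⟨hg.continuous.aestronglyMeasurable,
      (b.eLpNorm_normed_convolution_le hp hp' hf.1).trans_lt hf.2⟩,
    ?_, fun h => ?_⟩
  · rw [eLpNorm_sub_comm]
    exact b.eLpNorm_normed_convolution_sub_le hp hp' hf hC
  · simp_rw [b.normed_convolution_comp_add_sub (hf.locallyIntegrable hp) h]
    exact b.eLpNorm_normed_convolution_le hp hp' ((hf.1.comp_add_right h).sub hf.1)

theorem MeasureTheory.MemLp.exists_cutoff (hp' : p ≠ ∞) {g : E → ℝ} (hg : MemLp g p μ)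
    {η : ℝ≥0∞} (hη : 0 < η) :
    ∃ χ : E → ℝ, ContDiff ℝ (⊤ : ℕ∞) χ ∧ HasCompactSupport χ ∧ (∀ x, χ x ∈ Set.Icc 0 1) ∧
      eLpNorm (fun x => (1 - χ x) * g x) p μ ≤ η ∧
      ∀ h, eLpNorm (fun x => g x * (χ (x + h) - χ x)) p μ ≤ η * ENNReal.ofReal ‖h‖ := by
  obtain ⟨c, hc, hgc, -, -⟩ := hg.exists_hasCompactSupport_eLpNorm_sub_le hp' hη.ne'
  obtain ⟨R₀, hR₀⟩ := hc.isCompact.isBounded.subset_closedBall 0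
  let θ : ContDiffBump (0 : E) := ⟨1, 2, one_pos, one_lt_two⟩
  obtain ⟨K, hK⟩ := (θ.contDiff (n := ⊤)).lipschitzWith_of_hasCompactSupport θ.hasCompactSupport
    (by simp)
  -- Rescaling `θ` to radius `R` divides its Lipschitz constant by `R`.
  have hlip : Tendsto (fun R : ℝ => ENNReal.ofReal (K * R⁻¹) * eLpNorm g p μ) atTop (𝓝 0) := by
    simpa using ENNReal.Tendsto.mul_const (ENNReal.tendsto_ofReal
      (tendsto_inv_atTop_zero.const_mul (K : ℝ))) (Or.inr hg.2.ne)
  obtain ⟨R, hRR₀, hR1, hRK⟩ := ((eventually_ge_atTop R₀).and ((eventually_ge_atTop 1).and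
    (hlip.eventually_lt_const hη))).exists
  have hR : 0 < R := one_pos.trans_le hR1
  refine ⟨fun x => θ (R⁻¹ • x), (θ.contDiff).comp (contDiff_const_smul _),
    θ.hasCompactSupport.comp_smul (inv_ne_zero hR.ne'), fun x => ⟨θ.nonneg, θ.le_one⟩, ?_, ?_⟩
  · have hgc' : ∀ x, (1 - θ (R⁻¹ • x)) * g x = (1 - θ (R⁻¹ • x)) * (g - c) x := fun x => by
      by_cases hx : x ∈ tsupport c
      · rw [θ.one_of_mem_closedBall]
        · ring
        · rw [mem_closedBall_zero_iff, norm_smul, norm_inv, Real.norm_of_nonneg hR.le,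
            inv_mul_le_iff₀ hR, mul_one]
          exact (mem_closedBall_zero_iff.1 (hR₀ hx)).trans hRR₀
      · simp [image_eq_zero_of_notMem_tsupport hx]
    simp_rw [hgc']
    refine (eLpNorm_mono fun x => ?_).trans hgc
    rw [norm_mul]
    refine mul_le_of_le_one_left (norm_nonneg _) ?_
    rw [Real.norm_eq_abs, abs_le]
    constructor <;> linarith [θ.nonneg (x := R⁻¹ • x), θ.le_one (x := R⁻¹ • x)]
  · intro h
    have hχ : ∀ x, ‖θ (R⁻¹ • (x + h)) - θ (R⁻¹ • x)‖ ≤ K * R⁻¹ * ‖h‖ := fun x => by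
      have := hK.dist_le_mul (R⁻¹ • (x + h)) (R⁻¹ • x)
      rwa [dist_eq_norm, dist_eq_norm, ← smul_sub, add_sub_cancel_left, norm_smul, norm_inv,
        Real.norm_of_nonneg hR.le, ← mul_assoc] at this
    calc eLpNorm (fun x => g x * (θ (R⁻¹ • (x + h)) - θ (R⁻¹ • x))) p μ
        ≤ eLpNorm ((K * R⁻¹ * ‖h‖) • g) p μ := eLpNorm_mono fun x => by
          rw [norm_mul, Pi.smul_apply, norm_smul, mul_comm,
            Real.norm_of_nonneg (by positivity : (0 : ℝ) ≤ K * R⁻¹ * ‖h‖)]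
          exact mul_le_mul_of_nonneg_right (hχ x) (norm_nonneg _)
      _ = ENNReal.ofReal (K * R⁻¹) * eLpNorm g p μ * ENNReal.ofReal ‖h‖ := by
          rw [eLpNorm_const_smul, Real.enorm_eq_ofReal (by positivity),
            ENNReal.ofReal_mul (by positivity)]
          ring
      _ ≤ η * ENNReal.ofReal ‖h‖ := by gcongr

theorem tendsto_diffQuotient_of_forall_exists_limsup_lt (hs : s < 1)
    (hp : 1 ≤ p) {f : E → ℝ} (hf : AEStronglyMeasurable f μ)
    (happrox : ∀ ε > 0, ∃ φ : E → ℝ, ContDiff ℝ (⊤ : ℕ∞) φ ∧ HasCompactSupport φ ∧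
      limsup (diffQuotient p s μ (f - φ)) (𝓝[≠] 0) < ε) :
    Tendsto (diffQuotient p s μ f) (𝓝[≠] 0) (𝓝 0) := by
  rw [ENNReal.tendsto_nhds_zero]
  intro ε hε
  obtain ⟨φ, hφ, hφc, hlim⟩ := happrox (ε / 2) (ENNReal.half_pos hε.ne')
  filter_upwards [eventually_lt_of_limsup_lt hlim,
    (tendsto_diffQuotient_of_contDiff (μ := μ) (p := p) hs hφ hφc).eventually_lt_const
      (ENNReal.half_pos hε.ne')]
    with h hfφh hφh
  calc diffQuotient p s μ f h = diffQuotient p s μ ((f - φ) + φ) h := by rw [sub_add_cancel]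
    _ ≤ diffQuotient p s μ (f - φ) h + diffQuotient p s μ φ h :=
        diffQuotient_add_le hp (hf.sub hφ.continuous.aestronglyMeasurable)
          hφ.continuous.aestronglyMeasurable h
    _ ≤ ε / 2 + ε / 2 := add_le_add hfφh.le hφh.le
    _ = ε := ENNReal.add_halves ε

theorem MeasureTheory.MemLp.exists_contDiff_approx_of_forall_ball (hs0 : 0 ≤ s) (hs1 : s ≤ 1)
    (hp : 1 ≤ p) (hp' : p ≠ ∞) {f : E → ℝ} (hf : MemLp f p μ) {ε : ℝ≥0∞} (hε : 0 < ε) {δ : ℝ}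
    (hδ : 0 < δ) (hδ1 : δ ≤ 1) (hmod : ∀ y ∈ ball (0 : E) δ,
      eLpNorm (fun x => f (x + y) - f x) p μ ≤ ε * ENNReal.ofReal (‖y‖ ^ s)) :
    ∃ g : E → ℝ, ContDiff ℝ (⊤ : ℕ∞) g ∧ HasCompactSupport g ∧
      eLpNorm (f - g) p μ ≤ 2 * (ε * ENNReal.ofReal (δ ^ s)) ∧
      ∀ h ∈ ball (0 : E) δ, eLpNorm (fun x => (f - g) (x + h) - (f - g) x) p μ ≤
        3 * (ε * ENNReal.ofReal (‖h‖ ^ s)) := by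
  set X := ENNReal.ofReal (δ ^ s)
  have hX1 : X ≤ 1 := ENNReal.ofReal_le_one.2 (Real.rpow_le_one hδ.le hδ1 hs0)
  have hX0 : 0 < X := ENNReal.ofReal_pos.2 (Real.rpow_pos_of_pos hδ s)
  obtain ⟨g₀, hg₀, hg₀Lp, hfg₀, hΔg₀⟩ := hf.exists_mollification hp hp' hδ (C := ε * X)
    fun y hy => (hmod y hy).trans (mul_le_mul_right (ENNReal.ofReal_le_ofReal
      (Real.rpow_le_rpow (norm_nonneg y) (mem_ball_zero_iff.1 hy).le hs0)) ε)
  obtain ⟨χ, hχ, hχc, hχ01, hχtail, hχlip⟩ :=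
    hg₀Lp.exists_cutoff hp' (ENNReal.mul_pos hε.ne' hX0.ne')
  refine ⟨fun x => χ x * g₀ x, hχ.mul hg₀, hχc.mul_right, ?_, fun h hδh => ?_⟩
  · have hsplit : f - (fun x => χ x * g₀ x) = (f - g₀) + fun x => (1 - χ x) * g₀ x :=
      funext fun x => by simp only [Pi.add_apply, Pi.sub_apply]; ring
    rw [hsplit, two_mul]
    exact (eLpNorm_add_le (hf.1.sub hg₀Lp.1)
      ((continuous_const.sub hχ.continuous).mul hg₀.continuous).aestronglyMeasurable hp).trans
      (add_le_add hfg₀ hχtail)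
  · set Y := ENNReal.ofReal (‖h‖ ^ s)
    have hXY : X * ENNReal.ofReal ‖h‖ ≤ Y := by
      rw [← one_mul Y]
      exact mul_le_mul' hX1 (ENNReal.ofReal_le_ofReal (Real.self_le_rpow_of_le_one
        (norm_nonneg h) ((mem_ball_zero_iff.1 hδh).le.trans hδ1) hs1))
    calc _ ≤ eLpNorm (fun x => f (x + h) - f x) p μ +
          eLpNorm (fun x => g₀ (x + h) - g₀ x) p μ +
          eLpNorm (fun x => g₀ x * (χ (x + h) - χ x)) p μ :=
          eLpNorm_sub_comp_add_sub_mul_le hp hf.1 hg₀Lp.1 hχ.continuous.aestronglyMeasurable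
            (fun x => abs_le.2 ⟨by linarith [(hχ01 x).1], (hχ01 x).2⟩) h
      _ ≤ ε * Y + ε * Y + ε * Y := by
          gcongr
          · exact hmod h hδh
          · exact (hΔg₀ h).trans (hmod h hδh)
          · exact (hχlip h).trans (by rw [mul_assoc]; gcongr)
      _ = 3 * (ε * Y) := by ring

theorem exists_contDiff_eLpNorm_add_iSup_diffQuotient_le (hs0 : 0 ≤ s) (hs1 : s ≤ 1)
    (hp : 1 ≤ p) (hp' : p ≠ ∞) {f : E → ℝ} (hf : MemLp f p μ)
    (hquot : Tendsto (diffQuotient p s μ f) (𝓝[≠] 0) (𝓝 0)) {ε : ℝ≥0∞} (hε : 0 < ε) :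
    ∃ g : E → ℝ, ContDiff ℝ (⊤ : ℕ∞) g ∧ HasCompactSupport g ∧
      eLpNorm (f - g) p μ + ⨆ h : {h : E // h ≠ 0}, diffQuotient p s μ (f - g) h ≤ 6 * ε := by
  obtain ⟨δ, hδ, hδ1, hmod⟩ := exists_forall_ball_eLpNorm_le_of_tendsto_diffQuotient hquot hε
  obtain ⟨g, hg, hgc, hfg, hsmall⟩ :=
    hf.exists_contDiff_approx_of_forall_ball hs0 hs1 hp hp' hε hδ hδ1 hmod
  have hX1 : ENNReal.ofReal (δ ^ s) ≤ 1 := ENNReal.ofReal_le_one.2 (Real.rpow_le_one hδ.le hδ1 hs0)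
  refine ⟨g, hg, hgc, ?_⟩
  calc eLpNorm (f - g) p μ + ⨆ h : {h : E // h ≠ 0}, diffQuotient p s μ (f - g) h
      ≤ 2 * (ε * 1) + 4 * ε := by
        refine add_le_add (hfg.trans (by gcongr)) (iSup_diffQuotient_le hp hs0
          (hf.1.sub hg.continuous.aestronglyMeasurable) hδ.le
          (fun h hδh _ => (hsmall h hδh).trans ?_) ?_)
        · rw [← mul_assoc]; gcongr; norm_num
        · calc 2 * eLpNorm (f - g) p μ ≤ 2 * (2 * (ε * ENNReal.ofReal (δ ^ s))) := by gcongr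
            _ = 4 * ε * ENNReal.ofReal (δ ^ s) := by ring
    _ = 6 * ε := by ring

end Approximation

/-- For `s ∈ (0,1)`, `p ∈ [1,∞)`, a function `f ∈ L^p(ℝ^N)` can be approximated by
`C_c^∞` functions in the `N^{s,p}` norm (`L^p` norm plus limsup difference-quotient
seminorm) iff it can be approximated by `C_c^∞` functions in the Nikol'skii
`B^s_{p,∞}` norm (`L^p` norm plus supremum difference-quotient seminorm). -/
theorem closure_N_eq_closure_B (N : ℕ) (s : ℝ) (hs0 : 0 < s) (hs1 : s < 1)
    (p : ℝ≥0∞) (hp : 1 ≤ p) (hp' : p ≠ ⊤)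
    (f : EuclideanSpace ℝ (Fin N) → ℝ) (hf : MemLp f p volume) :
    (∃ fn : ℕ → EuclideanSpace ℝ (Fin N) → ℝ,
        (∀ n, ContDiff ℝ (⊤ : ℕ∞) (fn n) ∧ HasCompactSupport (fn n)) ∧
        Filter.Tendsto
          (fun n =>
            eLpNorm (fun x => f x - fn n x) p volume +
              Filter.limsup
                (fun h : EuclideanSpace ℝ (Fin N) =>
                  eLpNorm (fun x => (f (x + h) - fn n (x + h)) - (f x - fn n x)) p volume /
                    ENNReal.ofReal (‖h‖ ^ s))
                (𝓝[≠] (0 : EuclideanSpace ℝ (Fin N))))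
          atTop (𝓝 0)) ↔
      (∃ gn : ℕ → EuclideanSpace ℝ (Fin N) → ℝ,
        (∀ n, ContDiff ℝ (⊤ : ℕ∞) (gn n) ∧ HasCompactSupport (gn n)) ∧
        Filter.Tendsto
          (fun n =>
            eLpNorm (fun x => f x - gn n x) p volume +
              ⨆ h : {h : EuclideanSpace ℝ (Fin N) // h ≠ 0},
                eLpNorm (fun x => (f (x + h.1) - gn n (x + h.1)) - (f x - gn n x)) p volume /
                  ENNReal.ofReal (‖h.1‖ ^ s))
          atTop (𝓝 0)) := by
  constructor
  · rintro ⟨fn, hfn, htend⟩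
    have hquot : Tendsto (diffQuotient p s volume f) (𝓝[≠] 0) (𝓝 0) :=
      tendsto_diffQuotient_of_forall_exists_limsup_lt hs1 hp hf.1 fun ε hε => by
        obtain ⟨n, hn⟩ := (htend.eventually_lt_const hε).exists
        exact ⟨fn n, (hfn n).1, (hfn n).2, le_add_self.trans_lt hn⟩
    choose gn hgn hgnc hgn_le using fun n : ℕ =>
      exists_contDiff_eLpNorm_add_iSup_diffQuotient_le hs0.le hs1.le hp hp' hf hquot
        (ENNReal.inv_pos.2 (natCast_ne_top n))
    refine ⟨gn, fun n => ⟨hgn n, hgnc n⟩, ?_⟩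
    have h6 : Tendsto (fun n : ℕ => 6 * (n : ℝ≥0∞)⁻¹) atTop (𝓝 0) := by
      simpa using ENNReal.Tendsto.const_mul ENNReal.tendsto_inv_nat_nhds_zero (Or.inr ofNat_ne_top)
    exact tendsto_of_tendsto_of_tendsto_of_le_of_le tendsto_const_nhds h6 (fun _ => zero_le)
      hgn_le
  · rintro ⟨gn, hgn, htend⟩
    refine ⟨gn, hgn, tendsto_of_tendsto_of_tendsto_of_le_of_le tendsto_const_nhds htend
      (fun _ => zero_le) fun n => add_le_add_right ?_ _⟩
    refine limsup_le_of_le (by isBoundedDefault) ?_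
    filter_upwards [self_mem_nhdsWithin] with h hh
    exact le_iSup (fun h' : {h' : EuclideanSpace ℝ (Fin N) // h' ≠ 0} =>
      diffQuotient p s volume (fun x => f x - gn n x) h') ⟨h, hh⟩
end

section
/- Let $\delta>0$ and $g,h:(0,\delta)\to[0,\infty)$ be measurable. Assume $g(t)\leq g(t/2)$ for all $t\in(0,\delta)$ and that $h$ is non-increasing. Then there is a constant $C=C(N)>0$ such that $\delta^{-N}\int_0^\delta t^{N-1}g(t)\,dt\int_0^\delta t^{N-1}h(t)\,dt \leq C\int_0^\delta t^{N-1}g(t)h(t)\,dt.$ -/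
/-!
Cut `(0, δ)` into the dyadic shells `I_k = [δ 2^{-k-1}, δ 2^{-k})` and let `a_k`, `b_k`, `c_k` be
the integrals of `t^{N-1} g`, `t^{N-1} h`, `t^{N-1} g h` over `I_k`; put `q = 2^N`. The
substitution `t = 2u` and `g(t) ≤ g(t/2)` give `a_k ≤ q a_{k+1}`; monotonicity of `h` gives
`b_j ≤ δ^N q^{-j} h(δ 2^{-j-1})` and `h(δ 2^{-j-1}) a_k ≤ c_k` for `j < k`. So
`a_k b_j ≤ δ^N q^{-j} c_k` if `j < k`, while for `j ≥ k` moving `a_k` to `a_{j+1}` costs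
`q^{j+1-k}` and yields `a_k b_j ≤ δ^N q^{1-k} c_{j+1}`. Summing the geometric series in the
free index bounds `(∑ a)(∑ b)` by `4 q δ^N ∑ c`.
-/

open MeasureTheory ENNReal Set
open scoped Function

section DoublingSums

variable {a c η : ℕ → ℝ≥0∞} {q : ℝ≥0∞}

theorem le_pow_mul_of_le_mul_succ (ha : ∀ k, a k ≤ q * a (k + 1)) (k d : ℕ) :
    a k ≤ q ^ d * a (k + d) := by
  induction d with
  | zero => simp
  | succ d ih =>
    calc a k ≤ q ^ d * a (k + d) := ih
      _ ≤ q ^ d * (q * a (k + d + 1)) := by gcongr; exact ha _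
      _ = q ^ (d + 1) * a (k + (d + 1)) := by rw [pow_succ, mul_assoc, ← add_assoc]

theorem tsum_inv_pow_le_two (hq : 2 ≤ q) : ∑' j, q⁻¹ ^ j ≤ 2 := by
  rw [ENNReal.tsum_geometric, ENNReal.inv_le_iff_inv_le, ← ENNReal.one_sub_inv_two]
  gcongr

theorem mul_inv_pow_mul_le_of_le_mul_succ (hq : 1 ≤ q) (hq_top : q ≠ ∞)
    (ha : ∀ k, a k ≤ q * a (k + 1)) (hηa : ∀ j k, j < k → η j * a k ≤ c k) (j k : ℕ) :
    a k * (q⁻¹ ^ j * η j) ≤ q * (q⁻¹ ^ j * c k + q⁻¹ ^ k * c (j + 1)) := by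
  rcases lt_or_ge j k with hjk | hkj
  · calc a k * (q⁻¹ ^ j * η j) = 1 * (q⁻¹ ^ j * (η j * a k)) := by ring
      _ ≤ q * (q⁻¹ ^ j * c k + q⁻¹ ^ k * c (j + 1)) := by
        gcongr
        exact le_add_right (by gcongr; exact hηa j k hjk)
  · obtain ⟨m, rfl⟩ : ∃ m, j = k + m := ⟨j - k, by omega⟩
    have hpow : q ^ (m + 1) * q⁻¹ ^ (k + m) = q * q⁻¹ ^ k := by
      calc q ^ (m + 1) * q⁻¹ ^ (k + m) = q * q⁻¹ ^ k * (q * q⁻¹) ^ m := by ring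
        _ = q * q⁻¹ ^ k := by
          rw [ENNReal.mul_inv_cancel (one_pos.trans_le hq).ne' hq_top, one_pow, mul_one]
    calc a k * (q⁻¹ ^ (k + m) * η (k + m))
        ≤ q ^ (m + 1) * a (k + m + 1) * (q⁻¹ ^ (k + m) * η (k + m)) := by
          gcongr
          exact le_pow_mul_of_le_mul_succ ha k (m + 1)
      _ = q * q⁻¹ ^ k * (η (k + m) * a (k + m + 1)) := by rw [← hpow]; ring
      _ ≤ q * (q⁻¹ ^ (k + m) * c k + q⁻¹ ^ k * c (k + m + 1)) := by
        rw [mul_assoc]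
        gcongr
        exact le_add_left (by gcongr; exact hηa _ _ (Nat.lt_succ_self _))

theorem tsum_mul_tsum_inv_pow_mul_le (hq : 2 ≤ q) (hq_top : q ≠ ∞)
    (ha : ∀ k, a k ≤ q * a (k + 1)) (hηa : ∀ j k, j < k → η j * a k ≤ c k) :
    (∑' k, a k) * ∑' j, q⁻¹ ^ j * η j ≤ 4 * q * ∑' k, c k := by
  have hgeom := tsum_inv_pow_le_two hq
  have htail : ∑' j, c (j + 1) ≤ ∑' k, c k :=
    ENNReal.tsum_comp_le_tsum_of_injective (add_left_injective 1) c
  calc (∑' k, a k) * ∑' j, q⁻¹ ^ j * η j = ∑' k, ∑' j, a k * (q⁻¹ ^ j * η j) := by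
        simp_rw [ENNReal.tsum_mul_left, ENNReal.tsum_mul_right]
    _ ≤ ∑' k, ∑' j, q * (q⁻¹ ^ j * c k + q⁻¹ ^ k * c (j + 1)) := by
        refine ENNReal.tsum_le_tsum fun k => ENNReal.tsum_le_tsum fun j => ?_
        exact mul_inv_pow_mul_le_of_le_mul_succ (one_le_two.trans hq) hq_top ha hηa j k
    _ = q * ((∑' j, q⁻¹ ^ j) * ∑' k, c k + (∑' k, q⁻¹ ^ k) * ∑' j, c (j + 1)) := by
        simp_rw [ENNReal.tsum_mul_left, ENNReal.tsum_add, ENNReal.tsum_mul_left,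
          ENNReal.tsum_mul_right, ENNReal.tsum_mul_left]
    _ ≤ q * (2 * ∑' k, c k + 2 * ∑' k, c k) := by gcongr
    _ = 4 * q * ∑' k, c k := by ring

end DoublingSums

section DyadicShells

variable {δ : ℝ}

def dyadicShell (δ : ℝ) (k : ℕ) : Set ℝ := Ico (δ / 2 ^ (k + 1)) (δ / 2 ^ k)

theorem measurableSet_dyadicShell (k : ℕ) : MeasurableSet (dyadicShell δ k) :=
  measurableSet_Ico

theorem antitone_div_two_pow (hδ : 0 ≤ δ) : Antitone fun k : ℕ => δ / 2 ^ k :=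
  fun _ _ hkl => div_le_div_of_nonneg_left hδ (by positivity) (pow_le_pow_right₀ one_le_two hkl)

theorem div_two_pow_succ_mem_Ioo (hδ : 0 < δ) (k : ℕ) : δ / 2 ^ (k + 1) ∈ Ioo 0 δ :=
  ⟨by positivity, div_lt_self hδ (one_lt_pow₀ (by norm_num : (1 : ℝ) < 2) k.succ_ne_zero)⟩

theorem dyadicShell_subset_Ioo (hδ : 0 < δ) (k : ℕ) : dyadicShell δ k ⊆ Ioo 0 δ :=
  fun _ ht => ⟨(div_two_pow_succ_mem_Ioo hδ k).1.trans_le ht.1,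
    ht.2.trans_le (div_le_self hδ.le (one_le_pow₀ one_le_two))⟩

theorem pairwise_disjoint_dyadicShell (hδ : 0 ≤ δ) : Pairwise (Disjoint on dyadicShell δ) :=
  (antitone_div_two_pow hδ).pairwise_disjoint_on_Ico_succ

theorem iUnion_dyadicShell (hδ : 0 < δ) : ⋃ k, dyadicShell δ k = Ioo 0 δ := by
  refine (iUnion_subset (dyadicShell_subset_Ioo hδ)).antisymm fun t ht => ?_
  classical
  have hex : ∃ k : ℕ, δ / 2 ^ (k + 1) ≤ t := by
    obtain ⟨k, hk⟩ := pow_unbounded_of_one_lt (δ / t) (by norm_num : (1 : ℝ) < 2)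
    rw [div_lt_iff₀ ht.1, ← div_lt_iff₀' (by positivity)] at hk
    exact ⟨k, (antitone_div_two_pow hδ.le k.le_succ).trans hk.le⟩
  refine mem_iUnion.2 ⟨Nat.find hex, Nat.find_spec hex, ?_⟩
  cases hk : Nat.find hex with
  | zero => simpa using ht.2
  | succ k => simpa using Nat.find_min hex (hk ▸ k.lt_succ_self)

theorem lintegral_Ioo_eq_tsum_dyadicShell (hδ : 0 < δ) (f : ℝ → ℝ≥0∞) :
    ∫⁻ t in Ioo 0 δ, f t = ∑' k, ∫⁻ t in dyadicShell δ k, f t := by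
  rw [← iUnion_dyadicShell hδ,
    lintegral_iUnion measurableSet_dyadicShell (pairwise_disjoint_dyadicShell hδ.le)]

theorem preimage_two_mul_dyadicShell (k : ℕ) :
    (2 * ·) ⁻¹' dyadicShell δ k = dyadicShell δ (k + 1) := by
  rw [dyadicShell, dyadicShell, preimage_const_mul_Ico₀ _ _ two_pos, div_div, div_div,
    ← pow_succ, ← pow_succ]

end DyadicShells

theorem setLIntegral_eq_ofReal_mul_setLIntegral_comp_mul_left {c : ℝ} (hc : 0 < c)
    (f : ℝ → ℝ≥0∞) (s : Set ℝ) :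
    ∫⁻ t in s, f t = ENNReal.ofReal c * ∫⁻ u in (c * ·) ⁻¹' s, f (c * u) := by
  have he : MeasurableEmbedding (c * ·) := measurableEmbedding_mulLeft₀ hc.ne'
  have hmap : ∫⁻ u in (c * ·) ⁻¹' s, f (c * u) = ENNReal.ofReal c⁻¹ * ∫⁻ t in s, f t := by
    rw [← he.lintegral_map, ← he.restrict_map, Real.map_volume_mul_left hc.ne',
      Measure.restrict_smul, lintegral_smul_measure, smul_eq_mul, abs_inv, abs_of_pos hc]
  rw [hmap, ← mul_assoc, ← ENNReal.ofReal_mul hc.le, mul_inv_cancel₀ hc.ne', ENNReal.ofReal_one,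
    one_mul]

section ShellEstimates

variable {δ : ℝ} {g h : ℝ → ℝ}

theorem setLIntegral_dyadicShell_le_of_le_comp_half (hδ : 0 < δ)
    (hg : ∀ t ∈ Ioo 0 δ, g t ≤ g (t / 2)) (n k : ℕ) :
    ∫⁻ t in dyadicShell δ k, ENNReal.ofReal (t ^ n * g t) ≤
      2 ^ (n + 1) * ∫⁻ t in dyadicShell δ (k + 1), ENNReal.ofReal (t ^ n * g t) := by
  calc ∫⁻ t in dyadicShell δ k, ENNReal.ofReal (t ^ n * g t)
      ≤ ∫⁻ t in dyadicShell δ k, ENNReal.ofReal (t ^ n * g (t / 2)) := by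
        refine setLIntegral_mono' (measurableSet_dyadicShell k) fun t ht => ?_
        have ht' := dyadicShell_subset_Ioo hδ k ht
        exact ENNReal.ofReal_le_ofReal
          (mul_le_mul_of_nonneg_left (hg t ht') (by positivity [ht'.1]))
    _ = 2 * ∫⁻ u in dyadicShell δ (k + 1),
          ENNReal.ofReal (2 ^ n) * ENNReal.ofReal (u ^ n * g u) := by
        rw [setLIntegral_eq_ofReal_mul_setLIntegral_comp_mul_left two_pos,
          preimage_two_mul_dyadicShell, ENNReal.ofReal_ofNat]
        congr 2 with u
        rw [← ENNReal.ofReal_mul (by positivity), mul_div_cancel_left₀ u two_ne_zero, mul_pow,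
          mul_assoc]
    _ = 2 ^ (n + 1) * ∫⁻ t in dyadicShell δ (k + 1), ENNReal.ofReal (t ^ n * g t) := by
        rw [lintegral_const_mul' _ _ ENNReal.ofReal_ne_top, ENNReal.ofReal_pow zero_le_two,
          ENNReal.ofReal_ofNat, ← mul_assoc, pow_succ']

theorem setLIntegral_dyadicShell_le_of_antitoneOn (hδ : 0 < δ)
    (hh0 : ∀ t ∈ Ioo 0 δ, 0 ≤ h t) (hh : AntitoneOn h (Ioo 0 δ)) (n j : ℕ) :
    ∫⁻ t in dyadicShell δ j, ENNReal.ofReal (t ^ n * h t) ≤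
      ENNReal.ofReal (δ ^ (n + 1)) *
        ((2 ^ (n + 1))⁻¹ ^ j * ENNReal.ofReal (h (δ / 2 ^ (j + 1)))) := by
  have hmem := div_two_pow_succ_mem_Ioo hδ j
  have hbound : ∀ t ∈ dyadicShell δ j,
      ENNReal.ofReal (t ^ n * h t) ≤ ENNReal.ofReal ((δ / 2 ^ j) ^ n * h (δ / 2 ^ (j + 1))) := by
    intro t ht
    have ht' := dyadicShell_subset_Ioo hδ j ht
    exact ENNReal.ofReal_le_ofReal (mul_le_mul (pow_le_pow_left₀ ht'.1.le ht.2.le n)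
      (hh hmem ht' ht.1) (hh0 t ht') (by positivity))
  calc ∫⁻ t in dyadicShell δ j, ENNReal.ofReal (t ^ n * h t)
      ≤ ENNReal.ofReal ((δ / 2 ^ j) ^ n * h (δ / 2 ^ (j + 1))) * volume (dyadicShell δ j) := by
        rw [← setLIntegral_const]
        exact setLIntegral_mono' (measurableSet_dyadicShell j) hbound
    _ ≤ ENNReal.ofReal ((δ / 2 ^ j) ^ n * h (δ / 2 ^ (j + 1))) *
          ENNReal.ofReal (δ / 2 ^ j) := by
        rw [dyadicShell, Real.volume_Ico]
        gcongr
        exact sub_le_self _ hmem.1.le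
    _ = ENNReal.ofReal (δ ^ (n + 1)) *
          ((2 ^ (n + 1))⁻¹ ^ j * ENNReal.ofReal (h (δ / 2 ^ (j + 1)))) := by
        have hH := hh0 _ hmem
        rw [← ENNReal.ofReal_mul (by positivity), ← ENNReal.ofReal_ofNat 2,
          ← ENNReal.ofReal_pow zero_le_two, ← ENNReal.ofReal_inv_of_pos (by positivity),
          ← ENNReal.ofReal_pow (by positivity), ← ENNReal.ofReal_mul (by positivity),
          ← ENNReal.ofReal_mul (by positivity)]
        congr 1
        rw [mul_right_comm, ← pow_succ, div_pow, ← pow_mul, mul_comm j, pow_mul, div_eq_mul_inv,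
          inv_pow, mul_assoc]

theorem ofReal_mul_setLIntegral_dyadicShell_le_of_antitoneOn (hδ : 0 < δ)
    (hh0 : ∀ t ∈ Ioo 0 δ, 0 ≤ h t) (hh : AntitoneOn h (Ioo 0 δ)) (hg0 : ∀ t ∈ Ioo 0 δ, 0 ≤ g t)
    (n : ℕ) {j k : ℕ} (hjk : j < k) :
    ENNReal.ofReal (h (δ / 2 ^ (j + 1))) * ∫⁻ t in dyadicShell δ k, ENNReal.ofReal (t ^ n * g t) ≤
      ∫⁻ t in dyadicShell δ k, ENNReal.ofReal (t ^ n * g t * h t) := by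
  have hmem := div_two_pow_succ_mem_Ioo hδ j
  rw [← lintegral_const_mul' _ _ ENNReal.ofReal_ne_top]
  refine setLIntegral_mono' (measurableSet_dyadicShell k) fun t ht => ?_
  have ht' := dyadicShell_subset_Ioo hδ k ht
  have hle : h (δ / 2 ^ (j + 1)) ≤ h t :=
    hh ht' hmem (ht.2.le.trans (antitone_div_two_pow hδ.le hjk))
  rw [← ENNReal.ofReal_mul (hh0 _ hmem)]
  refine ENNReal.ofReal_le_ofReal ?_
  calc h (δ / 2 ^ (j + 1)) * (t ^ n * g t) ≤ h t * (t ^ n * g t) := by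
        gcongr
        exact mul_nonneg (by positivity [ht'.1]) (hg0 t ht')
    _ = t ^ n * g t * h t := by ring

end ShellEstimates

theorem lintegral_pow_mul_mul_lintegral_pow_mul_le {δ : ℝ} {g h : ℝ → ℝ} (hδ : 0 < δ)
    (hg0 : ∀ t ∈ Ioo 0 δ, 0 ≤ g t) (hh0 : ∀ t ∈ Ioo 0 δ, 0 ≤ h t)
    (hg : ∀ t ∈ Ioo 0 δ, g t ≤ g (t / 2)) (hh : AntitoneOn h (Ioo 0 δ)) (n : ℕ) :
    (∫⁻ t in Ioo 0 δ, ENNReal.ofReal (t ^ n * g t)) *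
        ∫⁻ t in Ioo 0 δ, ENNReal.ofReal (t ^ n * h t) ≤
      ENNReal.ofReal (δ ^ (n + 1)) *
        (4 * 2 ^ (n + 1) * ∫⁻ t in Ioo 0 δ, ENNReal.ofReal (t ^ n * g t * h t)) := by
  simp_rw [lintegral_Ioo_eq_tsum_dyadicShell hδ]
  have hq : (2 : ℝ≥0∞) ≤ 2 ^ (n + 1) := le_self_pow₀ one_le_two n.succ_ne_zero
  calc _ ≤ (∑' k, ∫⁻ t in dyadicShell δ k, ENNReal.ofReal (t ^ n * g t)) *
        ∑' j, ENNReal.ofReal (δ ^ (n + 1)) *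
          ((2 ^ (n + 1))⁻¹ ^ j * ENNReal.ofReal (h (δ / 2 ^ (j + 1)))) := by
        gcongr with j
        exact setLIntegral_dyadicShell_le_of_antitoneOn hδ hh0 hh n j
    _ ≤ _ := by
        rw [ENNReal.tsum_mul_left, mul_left_comm]
        gcongr _ * ?_
        exact tsum_mul_tsum_inv_pow_mul_le hq (ENNReal.pow_ne_top ENNReal.ofNat_ne_top)
          (setLIntegral_dyadicShell_le_of_le_comp_half hδ hg n)
          (fun _ _ => ofReal_mul_setLIntegral_dyadicShell_le_of_antitoneOn hδ hh0 hh hg0 n)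

/-- Bourgain–Brezis–Mironescu improvement of the Chebyshev inequality: if `g(t) ≤ g(t/2)`
on `(0,δ)` and `h` is non-increasing, then
`δ^{-N} ∫₀^δ t^{N-1} g ∫₀^δ t^{N-1} h ≤ C(N) ∫₀^δ t^{N-1} g h`. -/
theorem bbm_chebyshev (N : ℕ) (hN : 1 ≤ N) :
    ∃ C : ℝ, 0 < C ∧ ∀ (δ : ℝ), 0 < δ →
      ∀ g h : ℝ → ℝ, Measurable g → Measurable h →
        (∀ t ∈ Ioo 0 δ, 0 ≤ g t) → (∀ t ∈ Ioo 0 δ, 0 ≤ h t) →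
        (∀ t ∈ Ioo 0 δ, g t ≤ g (t / 2)) → AntitoneOn h (Ioo 0 δ) →
        ENNReal.ofReal (δ ^ (-(N : ℝ))) *
            (∫⁻ t in Ioo (0 : ℝ) δ, ENNReal.ofReal (t ^ (N - 1) * g t)) *
            (∫⁻ t in Ioo (0 : ℝ) δ, ENNReal.ofReal (t ^ (N - 1) * h t)) ≤
          ENNReal.ofReal C *
            ∫⁻ t in Ioo (0 : ℝ) δ, ENNReal.ofReal (t ^ (N - 1) * g t * h t) := by
  refine ⟨2 ^ (N + 2), by positivity, fun δ hδ g h _ _ hg0 hh0 hg hh => ?_⟩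
  have hN' : N - 1 + 1 = N := Nat.sub_add_cancel hN
  have hδN : ENNReal.ofReal (δ ^ (-(N : ℝ))) * ENNReal.ofReal (δ ^ N) = 1 := by
    rw [Real.rpow_neg hδ.le, Real.rpow_natCast, ← ENNReal.ofReal_mul (by positivity),
      inv_mul_cancel₀ (by positivity), ENNReal.ofReal_one]
  have hC : ENNReal.ofReal (2 ^ (N + 2)) = 4 * 2 ^ N := by
    rw [ENNReal.ofReal_pow zero_le_two, ENNReal.ofReal_ofNat, pow_add, mul_comm]
    norm_num
  calc _ = ENNReal.ofReal (δ ^ (-(N : ℝ))) *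
        ((∫⁻ t in Ioo 0 δ, ENNReal.ofReal (t ^ (N - 1) * g t)) *
          ∫⁻ t in Ioo 0 δ, ENNReal.ofReal (t ^ (N - 1) * h t)) := mul_assoc _ _ _
    _ ≤ ENNReal.ofReal (δ ^ (-(N : ℝ))) * (ENNReal.ofReal (δ ^ N) *
          (4 * 2 ^ N * ∫⁻ t in Ioo 0 δ, ENNReal.ofReal (t ^ (N - 1) * g t * h t))) := by
        gcongr _ * ?_
        simpa only [hN'] using lintegral_pow_mul_mul_lintegral_pow_mul_le hδ hg0 hh0 hg hh (N - 1)
    _ = _ := by rw [← mul_assoc, hδN, one_mul, hC]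
end
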